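/- arXiv:2311.12248 — 9 statements merged into one kernel-verified Lean document; each statement's English description precedes it below -/
import Mathlib

section
/- Let p ≥ 1 and let f : X → [0,1] be a function on a finite set X with E[f] = α and ‖f − α‖_p ≥ ε·α (where ‖g‖_p = (E|g|^p)^{1/p}). Then either the fraction of x ∈ X with f(x) > α(1 + ε/4) is at least ε^p α^p / 4, or the fraction of x ∈ X with f(x) < α(1 − ε/4) is at least ε^p / 4. -/
open Finset

/-!
Split `X` into the points above `α(1 + ε/4)`, the points below `α(1 − ε/4)`, and the rest.
Since `f` takes values in `[0,1]`, `|f x − α|^p` is at most `1` on the first set, at most `α^p`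
on the second and at most `(εα/4)^p ≤ (εα)^p / 4` on the third. Averaging,
`(εα)^p ≤ ‖f − α‖_p^p ≤ A + α^p B + (εα)^p / 4` for the two fractions `A`, `B`, which is impossible
if `A < ε^p α^p / 4` and `B < ε^p / 4`.
-/

namespace Real

lemma mul_rpow_le_mul_rpow_of_le_one {c x p : ℝ} (hc₀ : 0 ≤ c) (hc₁ : c ≤ 1) (hx : 0 ≤ x)
    (hp : 1 ≤ p) : (c * x) ^ p ≤ c * x ^ p := by
  rw [mul_rpow hc₀ hx]
  exact mul_le_mul_of_nonneg_right (rpow_le_self_of_le_one hc₀ hc₁ hp) (rpow_nonneg hx p)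

lemma abs_sub_rpow_le_of_mem_Icc {t a c p : ℝ} (ht : t ∈ Set.Icc (0 : ℝ) 1) (ha : 0 ≤ a)
    (hc : 0 ≤ c) (hp : 0 ≤ p) :
    |t - a| ^ p ≤ (if t > a * (1 + c) then 1 else 0) +
      (if t < a * (1 - c) then 1 else 0) * a ^ p + (c * a) ^ p := by
  obtain ⟨ht₀, ht₁⟩ := ht
  have hca : 0 ≤ (c * a) ^ p := rpow_nonneg (mul_nonneg hc ha) p
  by_cases hup : t > a * (1 + c)
  · have : |t - a| ^ p ≤ 1 :=
      rpow_le_one (abs_nonneg _) (abs_le.2 ⟨by nlinarith, by linarith⟩) hp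
    split_ifs <;> nlinarith [rpow_nonneg ha p]
  by_cases hdown : t < a * (1 - c)
  · have : |t - a| ^ p ≤ a ^ p :=
      rpow_le_rpow (abs_nonneg _) (abs_le.2 ⟨by linarith, by nlinarith⟩) hp
    simp only [hup, hdown, if_true, if_false]
    linarith
  · have : |t - a| ^ p ≤ (c * a) ^ p :=
      rpow_le_rpow (abs_nonneg _) (abs_le.2 ⟨by nlinarith, by nlinarith⟩) hp
    simp only [hup, hdown, if_false]
    linarith

end Real

lemma Finset.sum_abs_sub_rpow_le {X : Type*} [Fintype X] {f : X → ℝ}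
    (hf : ∀ x, f x ∈ Set.Icc (0 : ℝ) 1) {a c p : ℝ} (ha : 0 ≤ a) (hc : 0 ≤ c) (hp : 0 ≤ p) :
    ∑ x, |f x - a| ^ p ≤ ((univ.filter fun x => f x > a * (1 + c)).card : ℝ) +
      ((univ.filter fun x => f x < a * (1 - c)).card : ℝ) * a ^ p +
      Fintype.card X * (c * a) ^ p := by
  calc ∑ x, |f x - a| ^ p
      ≤ ∑ x, ((if f x > a * (1 + c) then 1 else 0) +
          (if f x < a * (1 - c) then 1 else 0) * a ^ p + (c * a) ^ p) :=
        sum_le_sum fun x _ => Real.abs_sub_rpow_le_of_mem_Icc (hf x) ha hc hp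
    _ = _ := by
      simp only [sum_add_distrib, ← sum_mul, sum_boole, sum_const, card_univ, nsmul_eq_mul]

theorem stmt_0_general {X : Type*} [Fintype X]
    (f : X → ℝ) (hf : ∀ x, f x ∈ Set.Icc (0 : ℝ) 1)
    (α : ℝ) (hα : α = (∑ x, f x) / (Fintype.card X))
    (ε : ℝ) (hε : ε ∈ Set.Ioo (0 : ℝ) 1)
    (p : ℝ) (hp : 1 ≤ p)
    (hnorm : ((∑ x, |f x - α| ^ p) / (Fintype.card X)) ^ (1 / p) ≥ ε * α) :
    ((Finset.univ.filter fun x => f x > α * (1 + ε / 4)).card : ℝ) / (Fintype.card X)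
        ≥ ε ^ p * α ^ p / 4 ∨
    ((Finset.univ.filter fun x => f x < α * (1 - ε / 4)).card : ℝ) / (Fintype.card X)
        ≥ ε ^ p / 4 := by
  have hp₀ : 0 < p := zero_lt_one.trans_le hp
  have hα₀ : 0 ≤ α := hα ▸ div_nonneg (sum_nonneg fun x _ => (hf x).1) (Nat.cast_nonneg _)
  rcases hα₀.eq_or_lt with rfl | hαpos
  · left
    rw [Real.zero_rpow hp₀.ne', mul_zero, zero_div]
    positivity
  have hn : (0 : ℝ) < Fintype.card X := by
    by_contra! h
    rw [le_antisymm h (Nat.cast_nonneg _), div_zero] at hα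
    exact hαpos.ne' hα
  have hε₀ := hε.1
  have hmoment : ε ^ p * α ^ p ≤ (∑ x, |f x - α| ^ p) / Fintype.card X := by
    rw [← Real.mul_rpow hε₀.le hα₀, ← Real.le_rpow_inv_iff_of_pos (by positivity)
      (by positivity) hp₀, ← one_div]
    exact hnorm
  have hsplit := sum_abs_sub_rpow_le hf hα₀ (c := ε / 4) (by positivity) hp₀.le
  have hquarter : (ε / 4 * α) ^ p ≤ ε ^ p * α ^ p / 4 := by
    calc (ε / 4 * α) ^ p = (1 / 4 * (ε * α)) ^ p := by ring_nf
      _ ≤ 1 / 4 * (ε * α) ^ p :=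
        Real.mul_rpow_le_mul_rpow_of_le_one (by norm_num) (by norm_num) (by positivity) hp
      _ = ε ^ p * α ^ p / 4 := by rw [Real.mul_rpow hε₀.le hα₀]; ring
  by_contra! ⟨hA, hB⟩
  rw [le_div_iff₀ hn] at hmoment
  rw [div_lt_iff₀ hn] at hA hB
  have hαp : 0 < α ^ p := Real.rpow_pos_of_pos hαpos p
  have hεp : 0 < ε ^ p := Real.rpow_pos_of_pos hε₀ p
  nlinarith [mul_lt_mul_of_pos_right hB hαp, mul_le_mul_of_nonneg_left hquarter hn.le,
    mul_pos hn (mul_pos hεp hαp)]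

/-- If `f : X → [0,1]` has average `α` and `‖f − α‖_p ≥ ε·α`, then either
the fraction of points with `f(x) > α(1+ε/4)` is at least `ε^p α^p / 4`, or the fraction
of points with `f(x) < α(1−ε/4)` is at least `ε^p / 4`. -/
theorem stmt_0 {X : Type*} [Fintype X] [Nonempty X]
    (f : X → ℝ) (hf : ∀ x, f x ∈ Set.Icc (0 : ℝ) 1)
    (α : ℝ) (hα : α = (∑ x, f x) / (Fintype.card X))
    (ε : ℝ) (hε : ε ∈ Set.Ioo (0 : ℝ) 1)
    (p : ℝ) (hp : 1 ≤ p)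
    (hnorm : ((∑ x, |f x - α| ^ p) / (Fintype.card X)) ^ (1 / p) ≥ ε * α) :
    ((Finset.univ.filter fun x => f x > α * (1 + ε / 4)).card : ℝ) / (Fintype.card X)
        ≥ ε ^ p * α ^ p / 4 ∨
    ((Finset.univ.filter fun x => f x < α * (1 - ε / 4)).card : ℝ) / (Fintype.card X)
        ≥ ε ^ p / 4 :=
  stmt_0_general f hf α hα ε hε p hp hnorm
end

section
/- Gowers–Cauchy–Schwarz for grid norms: let k, p ∈ ℕ and for i ∈ [k], j ∈ [p] let f_{ij} : X_i × Y_j → ℝ_{≥0} be nonnegative functions on products of finite sets. Then E_{x_1∈X_1,...,x_k∈X_k} E_{y_1∈Y_1,...,y_p∈Y_p} [∏_{i=1}^k ∏_{j=1}^p f_{ij}(x_i, y_j)] ≤ ∏_{i=1}^k ∏_{j=1}^p ‖f_{ij}‖_{U(k,p)}, where ‖f‖_{U(k,p)} = (E_{x∈X^k, y∈Y^p} ∏_{i,j} f(x_i, y_j))^{1/(kp)}. -/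
/-!
Expand the sum over `x` into a product over `i` of sums over `x_i ∈ X_i` and apply Hölder's
inequality with `k` equal exponents in the variable `y`. Expanding the `k`-th powers turns
each factor into the same kind of sum, now for the `k` copies of the single row `i`; Hölder in
the other variable, with `p` equal exponents, splits it into the unnormalized grid sums of the
`f i j`. Since every `x_i` occurs in `p` factors and every `y_j` in `k`, the normalizations
multiply out to `∏ |X_i| ∏ |Y_j|`.
-/

open Finset

/-- The grid norm `‖f‖_{U(k,p)}` of a function `f : X → Y → ℝ`. -/
noncomputable def gridNorm {X Y : Type*} [Fintype X] [Fintype Y]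
    (k p : ℕ) (f : X → Y → ℝ) : ℝ :=
  |(∑ x : Fin k → X, ∑ y : Fin p → Y, ∏ i, ∏ j, f (x i) (y j)) /
      ((Fintype.card X : ℝ) ^ k * (Fintype.card Y : ℝ) ^ p)| ^ (1 / (k * p : ℝ))

open MeasureTheory in
theorem ENNReal.sum_prod_rpow_le_prod_sum_rpow {α ι : Type*} [Fintype α] (s : Finset ι)
    (f : ι → α → ENNReal) {p : ι → ℝ} (hp : ∑ i ∈ s, p i = 1) (h2p : ∀ i ∈ s, 0 ≤ p i) :
    ∑ a, ∏ i ∈ s, f i a ^ p i ≤ ∏ i ∈ s, (∑ a, f i a) ^ p i := by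
  let _ : MeasurableSpace α := ⊤
  have : MeasurableSingletonClass α := ⟨fun _ => trivial⟩
  simpa only [lintegral_fintype, Measure.count_singleton, mul_one] using
    ENNReal.lintegral_prod_norm_pow_le (μ := Measure.count) s
      (fun i _ => (measurable_of_countable (f i)).aemeasurable) hp h2p

theorem Real.sum_prod_le_prod_sum_pow_card_rpow_inv {α ι : Type*} [Fintype α] [Fintype ι]
    [Nonempty ι] (g : ι → α → ℝ) (hg : ∀ i a, 0 ≤ g i a) :
    ∑ a, ∏ i, g i a ≤ ∏ i, (∑ a, g i a ^ Fintype.card ι) ^ (Fintype.card ι : ℝ)⁻¹ := by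
  set n := Fintype.card ι
  have hn : n ≠ 0 := Fintype.card_ne_zero
  have hsum : ∀ i, 0 ≤ ∑ a, g i a ^ n := fun i => sum_nonneg fun a _ => pow_nonneg (hg i a) n
  have key := ENNReal.sum_prod_rpow_le_prod_sum_rpow univ
    (fun i a => ENNReal.ofReal (g i a ^ n)) (p := fun _ => (n : ℝ)⁻¹)
    (by simp [n, hn]) (fun _ _ => by positivity)
  rw [← ENNReal.ofReal_le_ofReal_iff (prod_nonneg fun i _ => Real.rpow_nonneg (hsum i) _),
    ENNReal.ofReal_sum_of_nonneg (fun a _ => prod_nonneg fun i _ => hg i a),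
    ENNReal.ofReal_prod_of_nonneg (fun i _ => Real.rpow_nonneg (hsum i) _)]
  refine le_of_eq_of_le (sum_congr rfl fun a _ => ?_)
    (key.trans_eq (prod_congr rfl fun i _ => ?_))
  · rw [ENNReal.ofReal_prod_of_nonneg (fun i _ => hg i a)]
    refine prod_congr rfl fun i _ => ?_
    rw [ENNReal.ofReal_rpow_of_nonneg (pow_nonneg (hg i a) n) (by positivity),
      Real.pow_rpow_inv_natCast (hg i a) hn]
  · rw [← ENNReal.ofReal_rpow_of_nonneg (hsum i) (by positivity),
      ENNReal.ofReal_sum_of_nonneg (fun a _ => pow_nonneg (hg i a) n)]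

section BipartiteSum

variable {ι κ : Type*} [Fintype ι] [Fintype κ] [DecidableEq ι] [DecidableEq κ]
  {X : ι → Type*} {Y : κ → Type*} [∀ i, Fintype (X i)] [∀ j, Fintype (Y j)]

variable (X Y) in
noncomputable def bipartiteSum (F : ∀ i j, X i → Y j → ℝ) : ℝ :=
  ∑ x : ∀ i, X i, ∑ y : ∀ j, Y j, ∏ i, ∏ j, F i j (x i) (y j)

theorem bipartiteSum_nonneg {F : ∀ i j, X i → Y j → ℝ} (hF : ∀ i j x y, 0 ≤ F i j x y) :
    0 ≤ bipartiteSum X Y F :=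
  sum_nonneg fun _ _ => sum_nonneg fun _ _ => prod_nonneg fun _ _ => prod_nonneg fun _ _ => hF ..

theorem bipartiteSum_comm (F : ∀ i j, X i → Y j → ℝ) :
    bipartiteSum X Y F = bipartiteSum Y X (fun j i y x => F i j x y) := by
  rw [bipartiteSum, bipartiteSum, sum_comm]
  exact sum_congr rfl fun _ _ => sum_congr rfl fun _ _ => prod_comm

theorem bipartiteSum_le_prod_left [Nonempty ι] {F : ∀ i j, X i → Y j → ℝ}
    (hF : ∀ i j x y, 0 ≤ F i j x y) :
    bipartiteSum X Y F ≤
      ∏ i, bipartiteSum (fun _ : ι => X i) Y (fun _ j => F i j) ^ (Fintype.card ι : ℝ)⁻¹ := by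
  have hsum : bipartiteSum X Y F = ∑ y : ∀ j, Y j, ∏ i, ∑ x : X i, ∏ j, F i j x (y j) := by
    rw [bipartiteSum, sum_comm]
    exact sum_congr rfl fun y _ => (Fintype.prod_sum fun i x => ∏ j, F i j x (y j)).symm
  have hpow : ∀ i, ∑ y : ∀ j, Y j, (∑ x : X i, ∏ j, F i j x (y j)) ^ Fintype.card ι =
      bipartiteSum (fun _ : ι => X i) Y (fun _ j => F i j) := by
    intro i
    rw [bipartiteSum, sum_comm]
    refine sum_congr rfl fun y _ => ?_
    rw [← card_univ, ← prod_const, Fintype.prod_sum]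
  rw [hsum]
  simpa only [hpow] using Real.sum_prod_le_prod_sum_pow_card_rpow_inv
    (fun i (y : ∀ j, Y j) => ∑ x : X i, ∏ j, F i j x (y j))
    fun i y => sum_nonneg fun x _ => prod_nonneg fun j _ => hF i j x (y j)

theorem bipartiteSum_le_prod_right [Nonempty κ] {F : ∀ i j, X i → Y j → ℝ}
    (hF : ∀ i j x y, 0 ≤ F i j x y) :
    bipartiteSum X Y F ≤
      ∏ j, bipartiteSum X (fun _ : κ => Y j) (fun i _ => F i j) ^ (Fintype.card κ : ℝ)⁻¹ := by
  rw [bipartiteSum_comm]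
  refine (bipartiteSum_le_prod_left fun j i y x => hF i j x y).trans_eq
    (prod_congr rfl fun j _ => ?_)
  rw [bipartiteSum_comm (X := X)]

theorem bipartiteSum_le_prod_prod [Nonempty ι] [Nonempty κ] {F : ∀ i j, X i → Y j → ℝ}
    (hF : ∀ i j x y, 0 ≤ F i j x y) :
    bipartiteSum X Y F ≤ ∏ i, ∏ j,
      bipartiteSum (fun _ : ι => X i) (fun _ : κ => Y j) (fun _ _ => F i j) ^
        ((Fintype.card ι : ℝ)⁻¹ * (Fintype.card κ : ℝ)⁻¹) := by
  refine (bipartiteSum_le_prod_left hF).trans (prod_le_prod (fun i _ => ?_) fun i _ => ?_)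
  · exact Real.rpow_nonneg (bipartiteSum_nonneg fun _ j => hF i j) _
  · have hnonneg : ∀ j, 0 ≤ bipartiteSum (fun _ : ι => X i) (fun _ : κ => Y j)
        (fun _ _ => F i j) := fun j => bipartiteSum_nonneg fun _ _ => hF i j
    calc _ ≤ (∏ j, bipartiteSum (fun _ : ι => X i) (fun _ : κ => Y j) (fun _ _ => F i j) ^
            (Fintype.card κ : ℝ)⁻¹) ^ (Fintype.card ι : ℝ)⁻¹ :=
          Real.rpow_le_rpow (bipartiteSum_nonneg fun _ j => hF i j)
            (bipartiteSum_le_prod_right fun _ j => hF i j) (by positivity)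
      _ = _ := by
          rw [← Real.finsetProd_rpow _ _ fun j _ => Real.rpow_nonneg (hnonneg j) _]
          simp_rw [← Real.rpow_mul (hnonneg _), mul_comm]

end BipartiteSum

theorem gridNorm_eq_bipartiteSum {X Y : Type*} [Fintype X] [Fintype Y] {k p : ℕ} (hk : k ≠ 0)
    (hp : p ≠ 0) {f : X → Y → ℝ} (hf : ∀ x y, 0 ≤ f x y) :
    gridNorm k p f =
      bipartiteSum (fun _ : Fin k => X) (fun _ : Fin p => Y) (fun _ _ => f) ^
          ((k : ℝ)⁻¹ * (p : ℝ)⁻¹) /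
        ((Fintype.card X : ℝ) ^ (p : ℝ)⁻¹ * (Fintype.card Y : ℝ) ^ (k : ℝ)⁻¹) := by
  have hB := bipartiteSum_nonneg (X := fun _ : Fin k => X) (Y := fun _ : Fin p => Y)
    fun _ _ => hf
  rw [gridNorm, ← bipartiteSum, abs_of_nonneg (by positivity), one_div, mul_inv,
    Real.div_rpow hB (by positivity), Real.mul_rpow (by positivity) (by positivity),
    ← Real.rpow_natCast, ← Real.rpow_natCast (Fintype.card Y : ℝ),
    ← Real.rpow_mul (by positivity), ← Real.rpow_mul (by positivity)]
  congr 3 <;> field_simp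

theorem Real.prod_prod_rpow_inv_mul_rpow_inv {k p : ℕ} (hk : k ≠ 0) (hp : p ≠ 0)
    {a : Fin k → ℝ} {b : Fin p → ℝ} (ha : ∀ i, 0 ≤ a i) (hb : ∀ j, 0 ≤ b j) :
    ∏ i, ∏ j, (a i ^ (p : ℝ)⁻¹ * b j ^ (k : ℝ)⁻¹) = (∏ i, a i) * ∏ j, b j := by
  simp only [prod_mul_distrib, prod_const, card_univ, Fintype.card_fin, ← prod_pow,
    Real.rpow_inv_natCast_pow (ha _) hp, Real.rpow_inv_natCast_pow (hb _) hk]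

theorem stmt_1_general {k p : ℕ} (hk : 0 < k) (hp : 0 < p)
    (X : Fin k → Type*) (Y : Fin p → Type*)
    [∀ i, Fintype (X i)]
    [∀ j, Fintype (Y j)]
    (f : ∀ i j, X i → Y j → ℝ) (hf : ∀ i j x y, 0 ≤ f i j x y) :
    (∑ x : ∀ i, X i, ∑ y : ∀ j, Y j, ∏ i, ∏ j, f i j (x i) (y j)) /
        ((∏ i, (Fintype.card (X i) : ℝ)) * ∏ j, (Fintype.card (Y j) : ℝ))
      ≤ ∏ i, ∏ j, gridNorm k p (f i j) := by
  have : Nonempty (Fin k) := Fin.pos_iff_nonempty.mp hk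
  have : Nonempty (Fin p) := Fin.pos_iff_nonempty.mp hp
  have hnorm : ∏ i, ∏ j, gridNorm k p (f i j) =
      (∏ i, ∏ j, bipartiteSum (fun _ : Fin k => X i) (fun _ : Fin p => Y j)
        (fun _ _ => f i j) ^ ((k : ℝ)⁻¹ * (p : ℝ)⁻¹)) /
      ((∏ i, (Fintype.card (X i) : ℝ)) * ∏ j, (Fintype.card (Y j) : ℝ)) := by
    simp only [gridNorm_eq_bipartiteSum hk.ne' hp.ne' (hf _ _), prod_div_distrib]
    rw [Real.prod_prod_rpow_inv_mul_rpow_inv hk.ne' hp.ne' (fun _ => Nat.cast_nonneg _)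
      fun _ => Nat.cast_nonneg _]
  rw [hnorm]
  refine div_le_div_of_nonneg_right ?_ (by positivity)
  exact (bipartiteSum_le_prod_prod hf).trans_eq (by simp only [Fintype.card_fin])

/-- Gowers–Cauchy–Schwarz inequality for grid norms of nonnegative functions. -/
theorem stmt_1 {k p : ℕ} (hk : 0 < k) (hp : 0 < p)
    (X : Fin k → Type*) (Y : Fin p → Type*)
    [∀ i, Fintype (X i)] [∀ i, Nonempty (X i)]
    [∀ j, Fintype (Y j)] [∀ j, Nonempty (Y j)]
    (f : ∀ i j, X i → Y j → ℝ) (hf : ∀ i j x y, 0 ≤ f i j x y) :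
    (∑ x : ∀ i, X i, ∑ y : ∀ j, Y j, ∏ i, ∏ j, f i j (x i) (y j)) /
        ((∏ i, (Fintype.card (X i) : ℝ)) * ∏ j, (Fintype.card (Y j) : ℝ))
      ≤ ∏ i, ∏ j, gridNorm k p (f i j) :=
  stmt_1_general hk hp X Y f hf
end

section
/- Monotonicity of grid norms: if f : X × Y → ℝ_{≥0} is a nonnegative function on a product of nonempty finite sets, then for all natural numbers k ≤ k' and p, one has ‖f‖_{U(k,p)} ≤ ‖f‖_{U(k',p)}, and similarly the grid norm is monotone in the second parameter p. -/
/-!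
Averaging first over the `k` points of `X`, the grid average becomes the `k`-th moment, over
`y : Fin p → Y`, of `T y = 𝔼ₓ ∏ⱼ f x (y j)`, so `‖f‖_{U(k,p)} = ‖T‖ₖ ^ (1/p)` and monotonicity in
`k` is the monotonicity of power means. Monotonicity in `p` follows by exchanging `X` and `Y`.
-/

open Finset

section PowerMean

variable {ι : Type*} (s : Finset ι) (w z : ι → ℝ)

noncomputable def weightedPowerMean (p : ℝ) : ℝ :=
  (∑ i ∈ s, w i * z i ^ p) ^ p⁻¹

variable {s w z}

theorem weightedPowerMean_nonneg (hw : ∀ i ∈ s, 0 ≤ w i) (hz : ∀ i ∈ s, 0 ≤ z i) (p : ℝ) :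
    0 ≤ weightedPowerMean s w z p :=
  Real.rpow_nonneg (sum_nonneg fun i hi => mul_nonneg (hw i hi) (Real.rpow_nonneg (hz i hi) p)) _

theorem weightedPowerMean_le_weightedPowerMean (hw : ∀ i ∈ s, 0 ≤ w i)
    (hw' : ∑ i ∈ s, w i = 1) (hz : ∀ i ∈ s, 0 ≤ z i) {p q : ℝ} (hp : 0 < p) (hpq : p ≤ q) :
    weightedPowerMean s w z p ≤ weightedPowerMean s w z q := by
  have hq : 0 < q := hp.trans_le hpq
  have hzp : ∀ i ∈ s, 0 ≤ z i ^ p := fun i hi => Real.rpow_nonneg (hz i hi) p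
  have hA : 0 ≤ ∑ i ∈ s, w i * z i ^ p := sum_nonneg fun i hi => mul_nonneg (hw i hi) (hzp i hi)
  have jensen : (∑ i ∈ s, w i * z i ^ p) ^ (q / p) ≤ ∑ i ∈ s, w i * z i ^ q := by
    convert Real.rpow_arith_mean_le_arith_mean_rpow s w (fun i => z i ^ p) hw hw' hzp
      ((one_le_div hp).2 hpq) using 3 with i hi
    rw [← Real.rpow_mul (hz i hi), mul_div_cancel₀ q hp.ne']
  calc weightedPowerMean s w z p = ((∑ i ∈ s, w i * z i ^ p) ^ (q / p)) ^ q⁻¹ := by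
        rw [weightedPowerMean, ← Real.rpow_mul hA]
        congr 1
        field_simp
    _ ≤ weightedPowerMean s w z q :=
        Real.rpow_le_rpow (Real.rpow_nonneg hA _) jensen (inv_nonneg.2 hq.le)

end PowerMean

section GridNorm

variable {X Y : Type*} [Fintype X] [Fintype Y]

theorem sum_grid_prod_eq_sum_pow (f : X → Y → ℝ) (k p : ℕ) :
    ∑ x : Fin k → X, ∑ y : Fin p → Y, ∏ i, ∏ j, f (x i) (y j) =
      ∑ y : Fin p → Y, (∑ x, ∏ j, f x (y j)) ^ k := by
  rw [sum_comm]
  refine sum_congr rfl fun y _ => ?_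
  rw [sum_pow', Fintype.piFinset_univ]

theorem gridNorm_eq_weightedPowerMean_rpow (f : X → Y → ℝ) (hf : ∀ x y, 0 ≤ f x y) (k p : ℕ) :
    gridNorm k p f =
      weightedPowerMean univ (fun _ : Fin p → Y => ((Fintype.card Y : ℝ) ^ p)⁻¹)
        (fun y => (∑ x, ∏ j, f x (y j)) / Fintype.card X) k ^ (p : ℝ)⁻¹ := by
  have hT : ∀ y : Fin p → Y, 0 ≤ (∑ x, ∏ j, f x (y j)) / Fintype.card X :=
    fun y => div_nonneg (sum_nonneg fun x _ => prod_nonneg fun j _ => hf x (y j)) (by positivity)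
  have hmean : (∑ y : Fin p → Y, (∑ x, ∏ j, f x (y j)) ^ k) /
      ((Fintype.card X : ℝ) ^ k * (Fintype.card Y : ℝ) ^ p) =
      ∑ y : Fin p → Y, ((Fintype.card Y : ℝ) ^ p)⁻¹ *
        ((∑ x, ∏ j, f x (y j)) / Fintype.card X) ^ (k : ℝ) := by
    rw [sum_div]
    refine sum_congr rfl fun y _ => ?_
    rw [Real.rpow_natCast, div_pow]
    ring
  have hnonneg : 0 ≤ ∑ y : Fin p → Y, ((Fintype.card Y : ℝ) ^ p)⁻¹ *
      ((∑ x, ∏ j, f x (y j)) / Fintype.card X) ^ (k : ℝ) :=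
    sum_nonneg fun y _ => mul_nonneg (by positivity) (Real.rpow_nonneg (hT y) _)
  rw [gridNorm, sum_grid_prod_eq_sum_pow, hmean, abs_of_nonneg hnonneg, weightedPowerMean,
    ← Real.rpow_mul hnonneg, one_div, mul_inv]

theorem gridNorm_flip (f : X → Y → ℝ) (k p : ℕ) : gridNorm k p f = gridNorm p k (flip f) := by
  rw [gridNorm, gridNorm, sum_comm, mul_comm ((Fintype.card X : ℝ) ^ k), mul_comm (k : ℝ)]
  congr 3
  exact sum_congr rfl fun y _ => sum_congr rfl fun x _ => prod_comm

theorem gridNorm_mono_left [Nonempty Y] (f : X → Y → ℝ) (hf : ∀ x y, 0 ≤ f x y) {k k' : ℕ}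
    (p : ℕ) (hk : 0 < k) (hkk' : k ≤ k') : gridNorm k p f ≤ gridNorm k' p f := by
  have hw : ∀ y ∈ (univ : Finset (Fin p → Y)), 0 ≤ ((Fintype.card Y : ℝ) ^ p)⁻¹ :=
    fun _ _ => by positivity
  have hw' : ∑ _ : Fin p → Y, ((Fintype.card Y : ℝ) ^ p)⁻¹ = 1 := by
    rw [sum_const, card_univ, Fintype.card_fun, Fintype.card_fin, nsmul_eq_mul, Nat.cast_pow,
      mul_inv_cancel₀ (by positivity)]
  have hz : ∀ y ∈ (univ : Finset (Fin p → Y)), 0 ≤ (∑ x, ∏ j, f x (y j)) / Fintype.card X :=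
    fun y _ => div_nonneg (sum_nonneg fun x _ => prod_nonneg fun j _ => hf x (y j)) (by positivity)
  rw [gridNorm_eq_weightedPowerMean_rpow f hf, gridNorm_eq_weightedPowerMean_rpow f hf]
  gcongr
  · exact weightedPowerMean_nonneg hw hz _
  · exact weightedPowerMean_le_weightedPowerMean hw hw' hz (by exact_mod_cast hk)
      (by exact_mod_cast hkk')

end GridNorm

/-- Monotonicity of grid norms of nonnegative functions in both parameters. -/
theorem stmt_2 {X Y : Type*} [Fintype X] [Fintype Y] [Nonempty X] [Nonempty Y]
    (f : X → Y → ℝ) (hf : ∀ x y, 0 ≤ f x y)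
    (k k' p p' : ℕ) (hk : 0 < k) (hp : 0 < p) (hkk' : k ≤ k') (hpp' : p ≤ p') :
    gridNorm k p f ≤ gridNorm k' p f ∧ gridNorm k p f ≤ gridNorm k p' f := by
  refine ⟨gridNorm_mono_left f hf p hk hkk', ?_⟩
  rw [gridNorm_flip f k p, gridNorm_flip f k p']
  exact gridNorm_mono_left (flip f) (fun y x => hf x y) k hp hpp'
end

section
/- Rounding a convex combination of rectangles (part i): let Δ ≥ 1, γ, ε ∈ (0,1], let D : X × Y → ℝ_{≥0} with ‖D‖_∞ ≤ Δ, and let F be a convex combination of indicator functions of combinatorial rectangles S × T (S ⊆ X, T ⊆ Y) with ‖F‖_1 ≥ γ. If ⟨F/‖F‖_1, D⟩ ≥ 1 + ε, then there exists a rectangle S × T with (|S||T|)/(|X||Y|) ≥ εγ/(4Δ) such that E_{(x,y) ∈ S×T} D(x,y) ≥ 1 + ε/2. -/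
/-!
Write `F = ∑ᵢ cᵢ 𝟙[Sᵢ × Tᵢ]`, so that `∑ |F| = ∑ᵢ cᵢ |Sᵢ||Tᵢ|` and `∑ F D = ∑ᵢ cᵢ ∑_{Sᵢ × Tᵢ} D`.
If no rectangle of size at least `m = εγ|X||Y|/(4Δ)` has `D`-average `1 + ε/2`, then every
rectangle satisfies `∑_{S × T} D ≤ (1 + ε/2)|S||T| + Δm`: large ones by assumption, small ones
because `D ≤ Δ`. Averaging with the weights `cᵢ` and using `Δm = εγ|X||Y|/4 ≤ (ε/4) ∑ |F|`
gives `∑ F D ≤ (1 + 3ε/4) ∑ |F|`, contradicting `∑ F D ≥ (1 + ε) ∑ |F|`.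
-/

open Finset
open scoped Classical

section Rectangle

variable {X Y : Type*}

theorem sum_sum_ite_mem_and_mul [Fintype X] [Fintype Y] (S : Finset X) (T : Finset Y)
    (g : X → Y → ℝ) :
    ∑ x, ∑ y, (if x ∈ S ∧ y ∈ T then 1 else 0) * g x y = ∑ x ∈ S, ∑ y ∈ T, g x y := by
  simp_rw [ite_and, ite_mul, one_mul, zero_mul, ← ite_sum_zero, sum_ite_mem, univ_inter]

theorem sum_sum_convex_comb_mul [Fintype X] [Fintype Y] {ι : Type*} [Fintype ι] (c : ι → ℝ)
    (S : ι → Finset X) (T : ι → Finset Y) (g : X → Y → ℝ) :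
    ∑ x, ∑ y, (∑ i, c i * (if x ∈ S i ∧ y ∈ T i then 1 else 0)) * g x y
      = ∑ i, c i * ∑ x ∈ S i, ∑ y ∈ T i, g x y := by
  simp_rw [← sum_sum_ite_mem_and_mul (S _) (T _) g, mul_sum, sum_mul, mul_assoc]
  exact (sum_congr rfl fun _ _ => sum_comm).trans sum_comm

theorem sum_sum_le_mul_card {D : X → Y → ℝ} {Δ : ℝ} (hDΔ : ∀ x y, D x y ≤ Δ)
    (S : Finset X) (T : Finset Y) :
    ∑ x ∈ S, ∑ y ∈ T, D x y ≤ Δ * (#S * #T) := by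
  calc ∑ x ∈ S, ∑ y ∈ T, D x y ≤ ∑ _x ∈ S, ∑ _y ∈ T, Δ :=
        sum_le_sum fun x _ => sum_le_sum fun y _ => hDΔ x y
    _ = Δ * (#S * #T) := by simp only [sum_const, nsmul_eq_mul]; ring

theorem sum_sum_le_of_large_avg_lt {D : X → Y → ℝ} {Δ a m : ℝ} (hDΔ : ∀ x y, D x y ≤ Δ)
    (hΔ : 0 ≤ Δ) (ha : 0 ≤ a) (hm : 0 ≤ m) (S : Finset X) (T : Finset Y)
    (hlarge : m ≤ #S * #T → (∑ x ∈ S, ∑ y ∈ T, D x y) / (#S * #T) < a) :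
    ∑ x ∈ S, ∑ y ∈ T, D x y ≤ a * (#S * #T) + Δ * m := by
  have hbound := sum_sum_le_mul_card hDΔ S T
  have hs : (0 : ℝ) ≤ #S * #T := by positivity
  have hΔm : 0 ≤ Δ * m := mul_nonneg hΔ hm
  by_cases hsm : m ≤ #S * #T
  · rcases hs.eq_or_lt with hs0 | hspos
    -- on an empty rectangle the average is the junk value `0 / 0`, so use `D ≤ Δ` instead
    · rw [← hs0, mul_zero] at hbound ⊢
      linarith
    · linarith [(div_lt_iff₀ hspos).mp (hlarge hsm)]
  · calc ∑ x ∈ S, ∑ y ∈ T, D x y ≤ Δ * (#S * #T) := hbound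
      _ ≤ Δ * m := mul_le_mul_of_nonneg_left (not_le.mp hsm).le hΔ
      _ ≤ a * (#S * #T) + Δ * m := le_add_of_nonneg_left (mul_nonneg ha hs)

end Rectangle

theorem Finset.sum_mul_le_of_le_mul_add {ι : Type*} (s : Finset ι) {c d w : ι → ℝ} {a b : ℝ}
    (hc : ∀ i ∈ s, 0 ≤ c i) (hc1 : ∑ i ∈ s, c i = 1) (hd : ∀ i ∈ s, d i ≤ a * w i + b) :
    ∑ i ∈ s, c i * d i ≤ a * ∑ i ∈ s, c i * w i + b :=
  calc ∑ i ∈ s, c i * d i ≤ ∑ i ∈ s, c i * (a * w i + b) :=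
        sum_le_sum fun i hi => mul_le_mul_of_nonneg_left (hd i hi) (hc i hi)
    _ = a * ∑ i ∈ s, c i * w i + b := by
        simp_rw [mul_add, sum_add_distrib, ← sum_mul, hc1, one_mul, mul_sum, mul_left_comm]

theorem stmt_3_general {X Y : Type*} [Fintype X] [Fintype Y] [Nonempty X] [Nonempty Y]
    (Δ γ ε : ℝ) (hΔ : 1 ≤ Δ) (hγ : γ ∈ Set.Ioc (0 : ℝ) 1) (hε : ε ∈ Set.Ioc (0 : ℝ) 1)
    (D : X → Y → ℝ) (hDΔ : ∀ x y, D x y ≤ Δ)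
    (F : X → Y → ℝ)
    (hF : ∃ (n : ℕ) (c : Fin n → ℝ) (S : Fin n → Finset X) (T : Fin n → Finset Y),
        (∀ i, 0 ≤ c i) ∧ (∑ i, c i = 1) ∧
        ∀ x y, F x y = ∑ i, c i * (if x ∈ S i ∧ y ∈ T i then 1 else 0))
    (hF1 : γ ≤ (∑ x, ∑ y, |F x y|) / ((Fintype.card X : ℝ) * Fintype.card Y))
    (hFD : ((∑ x, ∑ y, F x y * D x y) / ((Fintype.card X : ℝ) * Fintype.card Y)) /
            ((∑ x, ∑ y, |F x y|) / ((Fintype.card X : ℝ) * Fintype.card Y))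
          ≥ 1 + ε) :
    ∃ (S : Finset X) (T : Finset Y),
      ((S.card : ℝ) * T.card) / ((Fintype.card X : ℝ) * Fintype.card Y) ≥ ε * γ / (4 * Δ) ∧
      (∑ x ∈ S, ∑ y ∈ T, D x y) / ((S.card : ℝ) * T.card) ≥ 1 + ε / 2 := by
  obtain ⟨hγ0, -⟩ := hγ
  obtain ⟨hε0, -⟩ := hε
  obtain ⟨n, c, S, T, hc0, hc1, hFdef⟩ := hF
  set N : ℝ := (Fintype.card X : ℝ) * Fintype.card Y
  have hN : 0 < N := by positivity
  have hF0 : ∀ x y, 0 ≤ F x y := fun x y =>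
    hFdef x y ▸ sum_nonneg fun i _ => mul_nonneg (hc0 i) (by positivity)
  have hnorm : ∑ x, ∑ y, |F x y| = ∑ i, c i * (#(S i) * #(T i)) := by
    simp_rw [abs_of_nonneg (hF0 _ _)]
    simpa only [hFdef, mul_one, sum_const, nsmul_eq_mul] using
      sum_sum_convex_comb_mul c S T fun _ _ => 1
  have hinner : ∑ x, ∑ y, F x y * D x y = ∑ i, c i * ∑ x ∈ S i, ∑ y ∈ T i, D x y := by
    simpa only [hFdef] using sum_sum_convex_comb_mul c S T D
  rw [hnorm] at hF1 hFD
  rw [hinner, div_div_div_cancel_right₀ hN.ne'] at hFD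
  set A := ∑ i, c i * (#(S i) * #(T i) : ℝ)
  have hA : γ * N ≤ A := (le_div_iff₀ hN).mp hF1
  have hA0 : 0 < A := (mul_pos hγ0 hN).trans_le hA
  have hBA := (le_div_iff₀ hA0).mp hFD
  by_contra! hcon
  have hΔ0 : 0 < Δ := by linarith
  have hB := Finset.sum_mul_le_of_le_mul_add _ (fun i _ => hc0 i) hc1 fun i _ =>
    sum_sum_le_of_large_avg_lt hDΔ hΔ0.le (by positivity) (by positivity) (S i) (T i)
      fun h => hcon _ _ ((le_div_iff₀ hN).mpr h)
  have hΔm : Δ * (ε * γ / (4 * Δ) * N) = ε * (γ * N) / 4 := by field_simp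
  linarith [mul_le_mul_of_nonneg_left hA hε0.le, mul_pos hε0 hA0]

/-- rounding a convex combination of combinatorial rectangles, upper case.
`F` is a convex combination of indicators of rectangles, `D` is nonnegative and bounded
by `Δ`, and if `⟨F/‖F‖₁, D⟩ ≥ 1 + ε` then some rectangle of density at least `εγ/(4Δ)`
has average of `D` at least `1 + ε/2`. -/
theorem stmt_3 {X Y : Type*} [Fintype X] [Fintype Y] [Nonempty X] [Nonempty Y]
    (Δ γ ε : ℝ) (hΔ : 1 ≤ Δ) (hγ : γ ∈ Set.Ioc (0 : ℝ) 1) (hε : ε ∈ Set.Ioc (0 : ℝ) 1)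
    (D : X → Y → ℝ) (hD0 : ∀ x y, 0 ≤ D x y) (hDΔ : ∀ x y, D x y ≤ Δ)
    (F : X → Y → ℝ)
    (hF : ∃ (n : ℕ) (c : Fin n → ℝ) (S : Fin n → Finset X) (T : Fin n → Finset Y),
        (∀ i, 0 ≤ c i) ∧ (∑ i, c i = 1) ∧
        ∀ x y, F x y = ∑ i, c i * (if x ∈ S i ∧ y ∈ T i then 1 else 0))
    (hF1 : γ ≤ (∑ x, ∑ y, |F x y|) / ((Fintype.card X : ℝ) * Fintype.card Y))
    (hFD : ((∑ x, ∑ y, F x y * D x y) / ((Fintype.card X : ℝ) * Fintype.card Y)) /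
            ((∑ x, ∑ y, |F x y|) / ((Fintype.card X : ℝ) * Fintype.card Y))
          ≥ 1 + ε) :
    ∃ (S : Finset X) (T : Finset Y),
      ((S.card : ℝ) * T.card) / ((Fintype.card X : ℝ) * Fintype.card Y) ≥ ε * γ / (4 * Δ) ∧
      (∑ x ∈ S, ∑ y ∈ T, D x y) / ((S.card : ℝ) * T.card) ≥ 1 + ε / 2 :=
  stmt_3_general Δ γ ε hΔ hγ hε D hDΔ F hF hF1 hFD
end

section
/- Rounding a convex combination of rectangles (part ii): let Δ ≥ 1, γ, ε ∈ (0,1], let D : X × Y → ℝ_{≥0} with ‖D‖_∞ ≤ Δ, and let F be a convex combination of indicator functions of combinatorial rectangles with ‖F‖_1 ≥ γ. If ⟨F/‖F‖_1, D⟩ ≤ 1 − ε, then there exists a rectangle S × T with (|S||T|)/(|X||Y|) ≥ εγ/(4Δ) such that E_{(x,y) ∈ S×T} D(x,y) ≤ 1 − ε/2. -/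
/-!
Write `F = ∑ᵢ cᵢ 1_{Sᵢ × Tᵢ}`, `mᵢ = |Sᵢ||Tᵢ|` and `Pᵢ = ∑_{Sᵢ × Tᵢ} D`, so that `∑ F = ∑ᵢ cᵢ mᵢ`
and `∑ F D = ∑ᵢ cᵢ Pᵢ`. If every rectangle of mass at least `τ` had `Pᵢ > (1 - ε/2) mᵢ`, then,
bounding the light rectangles by `Pᵢ ≥ 0 ≥ (1 - ε/2) mᵢ - τ`, averaging would give
`(1 - ε/2) ∑ F - τ ≤ ∑ F D ≤ (1 - ε) ∑ F`, i.e. `(ε/2) ∑ F ≤ τ`. With `τ = εγ|X||Y|/(4Δ)` this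
contradicts `∑ F ≥ γ|X||Y|` and `Δ ≥ 1`.
-/

open Finset
open scoped Classical

theorem sum_sum_ite_mem_and {X Y M : Type*} [Fintype X] [Fintype Y] [AddCommMonoid M]
    (S : Finset X) (T : Finset Y) (g : X → Y → M) :
    ∑ x, ∑ y, (if x ∈ S ∧ y ∈ T then g x y else 0) = ∑ x ∈ S, ∑ y ∈ T, g x y := by
  simp [ite_and, sum_ite_mem]

theorem sum_sum_mul_eq_sum_rect {ι X Y : Type*} [Fintype ι] [Fintype X] [Fintype Y]
    (c : ι → ℝ) (S : ι → Finset X) (T : ι → Finset Y) (F g : X → Y → ℝ)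
    (hF : ∀ x y, F x y = ∑ i, c i * (if x ∈ S i ∧ y ∈ T i then 1 else 0)) :
    ∑ x, ∑ y, F x y * g x y = ∑ i, c i * ∑ x ∈ S i, ∑ y ∈ T i, g x y := by
  calc ∑ x, ∑ y, F x y * g x y
      = ∑ x, ∑ y, ∑ i, c i * (if x ∈ S i ∧ y ∈ T i then g x y else 0) := by
        simp only [hF, sum_mul, mul_assoc, ite_mul, one_mul, zero_mul]
    _ = ∑ i, ∑ x, ∑ y, c i * (if x ∈ S i ∧ y ∈ T i then g x y else 0) := by
        simp only [sum_comm (γ := ι)]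
    _ = ∑ i, c i * ∑ x ∈ S i, ∑ y ∈ T i, g x y := by
        simp only [← mul_sum, sum_sum_ite_mem_and]

theorem exists_ge_and_le_mul_of_sum_mul_le {ι : Type*} (s : Finset ι) (c m P : ι → ℝ)
    (a b τ : ℝ) (hτ0 : 0 ≤ τ) (hc : ∀ i ∈ s, 0 ≤ c i) (hc1 : ∑ i ∈ s, c i = 1)
    (hm : ∀ i ∈ s, 0 ≤ m i) (hP : ∀ i ∈ s, 0 ≤ P i) (ha : a ≤ 1)
    (hPm : ∑ i ∈ s, c i * P i ≤ b * ∑ i ∈ s, c i * m i)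
    (hτ : τ < (a - b) * ∑ i ∈ s, c i * m i) :
    ∃ i ∈ s, τ ≤ m i ∧ P i ≤ a * m i := by
  by_contra! hcon
  have hterm : ∀ i ∈ s, c i * (a * m i - τ) ≤ c i * P i := by
    intro i hi
    refine mul_le_mul_of_nonneg_left ?_ (hc i hi)
    by_cases hheavy : τ ≤ m i
    · linarith [hcon i hi hheavy]
    · nlinarith [hm i hi, hP i hi]
  have hsum : a * ∑ i ∈ s, c i * m i - τ ≤ ∑ i ∈ s, c i * P i := by
    calc a * ∑ i ∈ s, c i * m i - τ = ∑ i ∈ s, c i * (a * m i - τ) := by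
          simp only [mul_sub, sum_sub_distrib, ← sum_mul, hc1, one_mul, mul_sum, mul_left_comm]
      _ ≤ ∑ i ∈ s, c i * P i := sum_le_sum hterm
  linarith

theorem stmt_4_general {X Y : Type*} [Fintype X] [Fintype Y]
    (Δ γ ε : ℝ) (hΔ : 1 ≤ Δ) (hγ : γ ∈ Set.Ioc (0 : ℝ) 1) (hε : ε ∈ Set.Ioc (0 : ℝ) 1)
    (D : X → Y → ℝ) (hD0 : ∀ x y, 0 ≤ D x y)
    (F : X → Y → ℝ)
    (hF : ∃ (n : ℕ) (c : Fin n → ℝ) (S : Fin n → Finset X) (T : Fin n → Finset Y),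
        (∀ i, 0 ≤ c i) ∧ (∑ i, c i = 1) ∧
        ∀ x y, F x y = ∑ i, c i * (if x ∈ S i ∧ y ∈ T i then 1 else 0))
    (hF1 : γ ≤ (∑ x, ∑ y, |F x y|) / ((Fintype.card X : ℝ) * Fintype.card Y))
    (hFD : ((∑ x, ∑ y, F x y * D x y) / ((Fintype.card X : ℝ) * Fintype.card Y)) /
            ((∑ x, ∑ y, |F x y|) / ((Fintype.card X : ℝ) * Fintype.card Y))
          ≤ 1 - ε) :
    ∃ (S : Finset X) (T : Finset Y),
      ((S.card : ℝ) * T.card) / ((Fintype.card X : ℝ) * Fintype.card Y) ≥ ε * γ / (4 * Δ) ∧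
      (∑ x ∈ S, ∑ y ∈ T, D x y) / ((S.card : ℝ) * T.card) ≤ 1 - ε / 2 := by
  obtain ⟨n, c, S, T, hc0, hc1, hFeq⟩ := hF
  obtain ⟨hε0, -⟩ := hε
  obtain ⟨hγ0, -⟩ := hγ
  have hΔ0 : 0 < Δ := by linarith
  set N : ℝ := (Fintype.card X : ℝ) * Fintype.card Y
  set W : ℝ := ∑ i, c i * ((S i).card * (T i).card)
  have hW : ∑ x, ∑ y, |F x y| = W := by
    have hF0 : ∀ x y, 0 ≤ F x y := fun x y => by
      rw [hFeq]; exact sum_nonneg fun i _ => mul_nonneg (hc0 i) (by positivity)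
    simpa [abs_of_nonneg (hF0 _ _), W] using sum_sum_mul_eq_sum_rect c S T F 1 hFeq
  rw [hW] at hF1 hFD
  obtain ⟨hWpos, hNpos⟩ : 0 < W ∧ 0 < N :=
    (div_pos_iff.mp (hγ0.trans_le hF1)).resolve_right fun h => h.2.not_ge (by positivity)
  rw [div_div_div_cancel_right₀ hNpos.ne', div_le_iff₀ hWpos,
    sum_sum_mul_eq_sum_rect c S T F D hFeq] at hFD
  have hτpos : 0 < ε * γ / (4 * Δ) * N := by positivity
  have hτ : ε * γ / (4 * Δ) * N < (1 - ε / 2 - (1 - ε)) * W := by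
    have hγN : γ * N ≤ W := (le_div_iff₀ hNpos).mp hF1
    have hΔ4 : ε * γ / (4 * Δ) ≤ ε * γ / 4 :=
      div_le_div_of_nonneg_left (by positivity) (by norm_num) (by linarith)
    nlinarith
  obtain ⟨i, -, hheavy, hlight⟩ := exists_ge_and_le_mul_of_sum_mul_le univ c
    (fun i => (S i).card * (T i).card) (fun i => ∑ x ∈ S i, ∑ y ∈ T i, D x y) _ _ _
    hτpos.le (fun i _ => hc0 i) hc1 (fun i _ => by positivity)
    (fun i _ => sum_nonneg fun x _ => sum_nonneg fun y _ => hD0 x y) (by linarith) hFD hτ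
  have hmass : 0 < ((S i).card : ℝ) * (T i).card := hheavy.trans_lt' hτpos
  exact ⟨S i, T i, (le_div_iff₀ hNpos).mpr hheavy, (div_le_iff₀ hmass).mpr hlight⟩

/-- rounding a convex combination of combinatorial rectangles, lower case.
`F` is a convex combination of indicators of rectangles, `D` is nonnegative and bounded
by `Δ`, and if `⟨F/‖F‖₁, D⟩ ≤ 1 − ε` then some rectangle of density at least `εγ/(4Δ)`
has average of `D` at most `1 − ε/2`. -/
theorem stmt_4 {X Y : Type*} [Fintype X] [Fintype Y] [Nonempty X] [Nonempty Y]
    (Δ γ ε : ℝ) (hΔ : 1 ≤ Δ) (hγ : γ ∈ Set.Ioc (0 : ℝ) 1) (hε : ε ∈ Set.Ioc (0 : ℝ) 1)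
    (D : X → Y → ℝ) (hD0 : ∀ x y, 0 ≤ D x y) (hDΔ : ∀ x y, D x y ≤ Δ)
    (F : X → Y → ℝ)
    (hF : ∃ (n : ℕ) (c : Fin n → ℝ) (S : Fin n → Finset X) (T : Fin n → Finset Y),
        (∀ i, 0 ≤ c i) ∧ (∑ i, c i = 1) ∧
        ∀ x y, F x y = ∑ i, c i * (if x ∈ S i ∧ y ∈ T i then 1 else 0))
    (hF1 : γ ≤ (∑ x, ∑ y, |F x y|) / ((Fintype.card X : ℝ) * Fintype.card Y))
    (hFD : ((∑ x, ∑ y, F x y * D x y) / ((Fintype.card X : ℝ) * Fintype.card Y)) /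
            ((∑ x, ∑ y, |F x y|) / ((Fintype.card X : ℝ) * Fintype.card Y))
          ≤ 1 - ε) :
    ∃ (S : Finset X) (T : Finset Y),
      ((S.card : ℝ) * T.card) / ((Fintype.card X : ℝ) * Fintype.card Y) ≥ ε * γ / (4 * Δ) ∧
      (∑ x ∈ S, ∑ y ∈ T, D x y) / ((S.card : ℝ) * T.card) ≤ 1 - ε / 2 :=
  stmt_4_general Δ γ ε hΔ hγ hε D hD0 F hF hF1 hFD
end

section
/- If g : X × Y → ℝ satisfies ‖g‖_{U(2,p)}² ≥ ε for some even p ≥ 2 and some ε ∈ (0, 1/2], and E_{z∈Y} g(x, z) = 0 for every x ∈ X, then for every even p' ≥ 2p/ε one has ‖1 + g‖_{U(2,p')} ≥ 1 + ε/5. -/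
/-!
Put `b x = 𝔼_z g (x 0) z * g (x 1) z` for pairs `x` of rows. The grid averages of `g` are the
moments `𝔼 b^s`; they are nonnegative, being also averages over columns of squares, and since the
rows of `g` have mean zero the grid averages of `1 + g` are the moments of `1 + b`. The hypothesis
says `𝔼 b^p ≥ ε^p`, and by Lyapunov's inequality `𝔼 b^s ≥ ε^s` for all even `s ≥ p`. Expanding
`𝔼 (1 + b)^p'` binomially and dropping the terms with `s < p` therefore leaves at least the even
terms `C(p', s) ε^s` with `s ≥ p`. As `p' ≥ 2p/ε`, these terms grow by a factor at least `9/4` from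
`s` to `s + 2` while `s < p`, so the tail from `p` on carries at least `5/9` of the even binomial
sum `((1 + ε)^p' + (1 - ε)^p')/2`. Hence `𝔼 (1 + b)^p' ≥ 5/18 (1 + ε)^p' ≥ (1 + ε/5)^(2p')`.
-/

open Finset

open scoped BigOperators

lemma rpow_expect_le_expect_rpow {ι : Type*} {s : Finset ι} (hs : s.Nonempty) {z : ι → ℝ}
    (hz : ∀ i ∈ s, 0 ≤ z i) {r : ℝ} (hr : 1 ≤ r) :
    (𝔼 i ∈ s, z i) ^ r ≤ 𝔼 i ∈ s, z i ^ r := by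
  have hw : ∑ _i ∈ s, (#s : ℝ)⁻¹ = 1 := by
    rw [sum_const, nsmul_eq_mul, mul_inv_cancel₀ (by exact_mod_cast hs.card_ne_zero)]
  simpa only [expect_eq_sum_div_card, div_eq_inv_mul, mul_sum] using
    Real.rpow_arith_mean_le_arith_mean_rpow s (fun _ => (#s : ℝ)⁻¹) z
      (fun _ _ => by positivity) hw hz hr

lemma sum_range_le_of_le_step_two {T : ℕ → ℝ} {c : ℝ} (hc : 0 ≤ c) (hT : ∀ s, 0 ≤ T s) {n : ℕ}
    (h : ∀ s < n, (1 + c) * T s ≤ c * T (s + 2)) :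
    ∑ s ∈ range n, T s ≤ c * (T n + T (n + 1)) := by
  induction n with
  | zero => simp only [range_zero, sum_empty]; have := hT 0; have := hT 1; positivity
  | succ n ih =>
    rw [sum_range_succ]
    have := h n n.lt_succ_self
    nlinarith [ih fun s hs => h s (by omega)]

lemma nine_mul_choose_le (n s : ℕ) {ε : ℝ} (hε : ε ≤ 1 / 2) (hs : 2 * (s + 2 : ℝ) ≤ ε * n) :
    9 * (n.choose s : ℝ) ≤ 4 * ε ^ 2 * n.choose (s + 2) := by
  have hsn : s + 2 ≤ n := by
    have : (s + 2 : ℝ) ≤ n := by nlinarith [(Nat.cast_nonneg s : (0 : ℝ) ≤ s)]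
    exact_mod_cast this
  have h1 : (n.choose (s + 1) : ℝ) * (s + 1) = n.choose s * ((n : ℝ) - s) := by
    rw [← Nat.cast_sub (by omega)]; exact_mod_cast Nat.choose_succ_right_eq n s
  have h2 : (n.choose (s + 2) : ℝ) * (s + 2) = n.choose (s + 1) * ((n : ℝ) - (s + 1)) := by
    rw [← Nat.cast_add_one, ← Nat.cast_sub (by omega)]
    exact_mod_cast Nat.choose_succ_right_eq n (s + 1)
  have hsε : ε * s ≤ s / 2 := by nlinarith [(Nat.cast_nonneg s : (0 : ℝ) ≤ s)]
  have hprod : 9 * ((s + 1 : ℝ) * (s + 2)) ≤ (2 * ε * (n - s)) * (2 * ε * (n - (s + 1))) := by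
    have a1 : 3 * (s + 2 : ℝ) ≤ 2 * ε * (n - s) := by nlinarith
    have a2 : 3 * (s + 1 : ℝ) ≤ 2 * ε * (n - (s + 1)) := by nlinarith
    nlinarith [(Nat.cast_nonneg s : (0 : ℝ) ≤ s)]
  refine le_of_mul_le_mul_right ?_ (by positivity : (0 : ℝ) < (s + 1) * (s + 2))
  calc 9 * (n.choose s : ℝ) * ((s + 1) * (s + 2)) = n.choose s * (9 * ((s + 1) * (s + 2))) := by
        ring
    _ ≤ n.choose s * ((2 * ε * (n - s)) * (2 * ε * (n - (s + 1)))) := by gcongr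
    _ = 4 * ε ^ 2 * n.choose (s + 2) * ((s + 1) * (s + 2)) := by
        linear_combination (-4 * ε ^ 2 * (s + 1)) * h2 - 4 * ε ^ 2 * ((n : ℝ) - (s + 1)) * h1

noncomputable def evenBinomTerm (n : ℕ) (ε : ℝ) (s : ℕ) : ℝ :=
  if Even s then (n.choose s : ℝ) * ε ^ s else 0

lemma evenBinomTerm_nonneg (n : ℕ) {ε : ℝ} (hε : 0 ≤ ε) (s : ℕ) : 0 ≤ evenBinomTerm n ε s := by
  unfold evenBinomTerm; split_ifs <;> positivity

lemma sum_evenBinomTerm (n : ℕ) (ε : ℝ) :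
    ∑ s ∈ range (n + 1), evenBinomTerm n ε s = ((1 + ε) ^ n + (1 - ε) ^ n) / 2 := by
  rw [eq_div_iff two_ne_zero, sub_eq_add_neg, add_comm 1 ε, add_comm 1 (-ε), add_pow, add_pow,
    ← sum_add_distrib, sum_mul]
  refine sum_congr rfl fun s _ => ?_
  rcases Nat.even_or_odd s with hs | hs
  · simp [evenBinomTerm, hs, hs.neg_pow]; ring
  · simp [evenBinomTerm, Nat.not_even_iff_odd.mpr hs, hs.neg_pow]

lemma nine_mul_evenBinomTerm_le {n p s : ℕ} {ε : ℝ} (hε : ε ≤ 1 / 2) (hp : Even p) (hs : s < p)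
    (hpn : 2 * (p : ℝ) ≤ ε * n) :
    9 * evenBinomTerm n ε s ≤ 4 * evenBinomTerm n ε (s + 2) := by
  rcases Nat.even_or_odd s with hse | hso
  · have hs2 : s + 2 ≤ p := by obtain ⟨a, rfl⟩ := hp; obtain ⟨c, rfl⟩ := hse; omega
    have hs2' : (s + 2 : ℝ) ≤ p := by exact_mod_cast hs2
    have hC := nine_mul_choose_le n s hε (by linarith)
    simp only [evenBinomTerm, hse, hse.add even_two, if_true]
    calc 9 * ((n.choose s : ℝ) * ε ^ s) = 9 * n.choose s * ε ^ s := by ring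
      _ ≤ 4 * ε ^ 2 * n.choose (s + 2) * ε ^ s := mul_le_mul_of_nonneg_right hC (hse.pow_nonneg ε)
      _ = 4 * ((n.choose (s + 2) : ℝ) * ε ^ (s + 2)) := by ring
  · simp [evenBinomTerm, Nat.not_even_iff_odd.mpr hso,
      Nat.not_even_iff_odd.mpr (hso.add_even even_two)]

lemma eighteen_fifths_mul_pow_le {ε : ℝ} (hε0 : 0 ≤ ε) (hε : ε ≤ 1 / 2) {n : ℕ} (hn : Even n)
    (hεn : 4 ≤ ε * n) : 18 / 5 * (1 + ε / 5) ^ (2 * n) ≤ (1 + ε) ^ n := by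
  obtain ⟨K, rfl⟩ := hn
  have hK : 2 ≤ ε * K := by push_cast at hεn; linarith
  have hsq : (1 + ε / 5) ^ 2 * (1 + 47 * ε / 100) ≤ 1 + ε := by
    nlinarith [mul_nonneg hε0 (sub_nonneg.2 hε), mul_nonneg (mul_nonneg hε0 hε0) (sub_nonneg.2 hε)]
  have hbern : 18 / 5 ≤ (1 + 47 * ε / 100) ^ (K + K) :=
    calc (18 / 5 : ℝ) ≤ (1 + K * (47 * ε / 100)) ^ 2 := by nlinarith
      _ ≤ ((1 + 47 * ε / 100) ^ K) ^ 2 := by gcongr; exact one_add_mul_le_pow (by linarith) K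
      _ = (1 + 47 * ε / 100) ^ (K + K) := by rw [← pow_mul, mul_two]
  calc 18 / 5 * (1 + ε / 5) ^ (2 * (K + K))
        ≤ ((1 + ε / 5) ^ 2) ^ (K + K) * (1 + 47 * ε / 100) ^ (K + K) := by
        rw [← pow_mul, mul_comm]; gcongr
    _ = ((1 + ε / 5) ^ 2 * (1 + 47 * ε / 100)) ^ (K + K) := (mul_pow _ _ _).symm
    _ ≤ (1 + ε) ^ (K + K) := by gcongr

section Moments

variable {Ω : Type*} [Fintype Ω]

lemma expect_one_add_pow (b : Ω → ℝ) (n : ℕ) :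
    𝔼 ω, (1 + b ω) ^ n = ∑ s ∈ range (n + 1), (n.choose s : ℝ) * 𝔼 ω, b ω ^ s := by
  simp only [add_comm (1 : ℝ), add_pow, one_pow, mul_one, expect_sum_comm, mul_expect, mul_comm]

variable [Nonempty Ω]

lemma pow_le_expect_abs_pow_of_pow_le (b : Ω → ℝ) {ε : ℝ} (hε : 0 ≤ ε) {p s : ℕ} (hp : p ≠ 0)
    (hps : p ≤ s) (h : ε ^ p ≤ 𝔼 ω, |b ω| ^ p) : ε ^ s ≤ 𝔼 ω, |b ω| ^ s := by
  have hr : 1 ≤ (s : ℝ) / p := by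
    rw [one_le_div (by positivity)]; exact_mod_cast hps
  have pow_rpow : ∀ x : ℝ, 0 ≤ x → (x ^ p) ^ ((s : ℝ) / p) = x ^ s := fun x hx => by
    rw [← Real.rpow_natCast x p, ← Real.rpow_mul hx, mul_div_cancel₀ _ (by positivity),
      Real.rpow_natCast]
  calc ε ^ s = (ε ^ p) ^ ((s : ℝ) / p) := (pow_rpow ε hε).symm
    _ ≤ (𝔼 ω, |b ω| ^ p) ^ ((s : ℝ) / p) := by gcongr
    _ ≤ 𝔼 ω, (|b ω| ^ p) ^ ((s : ℝ) / p) :=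
      rpow_expect_le_expect_rpow univ_nonempty (fun _ _ => by positivity) hr
    _ = 𝔼 ω, |b ω| ^ s := by simp only [pow_rpow _ (abs_nonneg _)]

theorem mul_one_add_pow_le_expect_one_add_pow (b : Ω → ℝ)
    (hodd : ∀ s, Odd s → 0 ≤ 𝔼 ω, b ω ^ s) {p n : ℕ} (hp : Even p) (hp0 : p ≠ 0) {ε : ℝ}
    (hε : ε ≤ 1 / 2) (hpn : 2 * (p : ℝ) ≤ ε * n) (hb : ε ^ p ≤ 𝔼 ω, b ω ^ p) :
    5 / 18 * (1 + ε) ^ n ≤ 𝔼 ω, (1 + b ω) ^ n := by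
  have hp1 : (1 : ℝ) ≤ p := by exact_mod_cast Nat.one_le_iff_ne_zero.mpr hp0
  have hε0 : 0 ≤ ε := by nlinarith [(Nat.cast_nonneg n : (0 : ℝ) ≤ n)]
  have hpn' : p + 2 ≤ n + 1 := by
    have : (p : ℝ) + 1 ≤ n := by nlinarith
    have : p + 1 ≤ n := by exact_mod_cast this
    omega
  have hmom : ∀ s, 0 ≤ 𝔼 ω, b ω ^ s := fun s => by
    rcases Nat.even_or_odd s with hs | hs
    · exact expect_nonneg fun ω _ => hs.pow_nonneg _
    · exact hodd s hs
  have hbabs : ∀ s, Even s → 𝔼 ω, |b ω| ^ s = 𝔼 ω, b ω ^ s := fun s hs => by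
    simp only [hs.pow_abs]
  have hterm : ∀ s, p ≤ s → evenBinomTerm n ε s ≤ n.choose s * 𝔼 ω, b ω ^ s := fun s hs => by
    unfold evenBinomTerm
    split_ifs with hse
    · gcongr
      rw [← hbabs s hse]
      exact pow_le_expect_abs_pow_of_pow_le b hε0 hp0 hs (by rwa [hbabs p hp])
    · exact mul_nonneg (Nat.cast_nonneg _) (hmom s)
  set u := evenBinomTerm n ε
  have hu := evenBinomTerm_nonneg n hε0
  have hlow : ∑ s ∈ range p, u s ≤ 4 / 5 * ∑ s ∈ Ico p (n + 1), u s := by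
    have hgeom := sum_range_le_of_le_step_two (c := 4 / 5) (by norm_num) hu
      fun s hs => by linarith [nine_mul_evenBinomTerm_le hε hp hs hpn]
    have htop : u p + u (p + 1) ≤ ∑ s ∈ Ico p (n + 1), u s := by
      calc u p + u (p + 1) = ∑ s ∈ Ico p (p + 2), u s := by
            rw [sum_Ico_succ_top (by omega), sum_Ico_succ_top le_rfl, Ico_self, sum_empty, zero_add]
        _ ≤ ∑ s ∈ Ico p (n + 1), u s :=
            sum_le_sum_of_subset_of_nonneg (Ico_subset_Ico le_rfl hpn') fun s _ _ => hu s
    linarith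
  have h1ε : 0 ≤ (1 - ε) ^ n := pow_nonneg (by linarith) n
  calc 5 / 18 * (1 + ε) ^ n ≤ 5 / 9 * ∑ s ∈ range (n + 1), u s := by
        rw [sum_evenBinomTerm]; linarith
    _ = 5 / 9 * (∑ s ∈ range p, u s + ∑ s ∈ Ico p (n + 1), u s) := by
        rw [sum_range_add_sum_Ico _ (by omega)]
    _ ≤ ∑ s ∈ Ico p (n + 1), u s := by linarith
    _ ≤ ∑ s ∈ Ico p (n + 1), (n.choose s : ℝ) * 𝔼 ω, b ω ^ s :=
        sum_le_sum fun s hs => hterm s (mem_Ico.mp hs).1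
    _ ≤ ∑ s ∈ range (n + 1), (n.choose s : ℝ) * 𝔼 ω, b ω ^ s :=
        sum_le_sum_of_subset_of_nonneg (by rw [range_eq_Ico]; exact Ico_subset_Ico_left p.zero_le)
          fun s _ _ => mul_nonneg (Nat.cast_nonneg _) (hmom s)
    _ = 𝔼 ω, (1 + b ω) ^ n := (expect_one_add_pow b n).symm

end Moments

lemma Fintype.expect_pow_eq_expect_prod {ι : Type*} [Fintype ι] (f : ι → ℝ) (n : ℕ) :
    (𝔼 i, f i) ^ n = 𝔼 x : Fin n → ι, ∏ j, f (x j) := by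
  rw [expect_pow, Fintype.piFinset_univ]

section Grid

variable {X Y : Type*} [Fintype X] [Fintype Y]

lemma gridNorm_eq_expect (k p : ℕ) (f : X → Y → ℝ) :
    gridNorm k p f =
      |𝔼 x : Fin k → X, 𝔼 y : Fin p → Y, ∏ i, ∏ j, f (x i) (y j)| ^ (1 / (k * p : ℝ)) := by
  simp only [gridNorm, Fintype.expect_eq_sum_div_card, Fintype.card_fun, Fintype.card_fin,
    ← sum_div, div_div, Nat.cast_pow, mul_comm]

lemma gridNorm_pow {k p : ℕ} (hk : k ≠ 0) (hp : p ≠ 0) (f : X → Y → ℝ) :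
    gridNorm k p f ^ (k * p) = |𝔼 x : Fin k → X, 𝔼 y : Fin p → Y, ∏ i, ∏ j, f (x i) (y j)| := by
  rw [gridNorm_eq_expect, one_div, ← Nat.cast_mul,
    Real.rpow_inv_natCast_pow (abs_nonneg _) (mul_ne_zero hk hp)]

lemma expect_grid_eq_expect_pow_left (k p : ℕ) (f : X → Y → ℝ) :
    𝔼 x : Fin k → X, 𝔼 y : Fin p → Y, ∏ i, ∏ j, f (x i) (y j) =
      𝔼 x : Fin k → X, (𝔼 z, ∏ i, f (x i) z) ^ p := by
  simp only [Fintype.expect_pow_eq_expect_prod]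
  exact expect_congr rfl fun x _ => expect_congr rfl fun y _ => prod_comm

lemma expect_grid_eq_expect_pow_right (k p : ℕ) (f : X → Y → ℝ) :
    𝔼 x : Fin k → X, 𝔼 y : Fin p → Y, ∏ i, ∏ j, f (x i) (y j) =
      𝔼 y : Fin p → Y, (𝔼 u, ∏ j, f u (y j)) ^ k := by
  simp only [Fintype.expect_pow_eq_expect_prod]
  exact expect_comm _ _ _

lemma expect_grid_nonneg {k : ℕ} (hk : Even k) (p : ℕ) (f : X → Y → ℝ) :
    0 ≤ 𝔼 x : Fin k → X, 𝔼 y : Fin p → Y, ∏ i, ∏ j, f (x i) (y j) := by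
  rw [expect_grid_eq_expect_pow_right]
  exact expect_nonneg fun y _ => hk.pow_nonneg _

end Grid

lemma expect_prod_one_add_of_sum_eq_zero {X Y : Type*} [Fintype Y] [Nonempty Y] {g : X → Y → ℝ}
    (hmarg : ∀ x, ∑ z, g x z = 0) (x : Fin 2 → X) :
    𝔼 z, ∏ i, (1 + g (x i) z) = 1 + 𝔼 z, ∏ i, g (x i) z := by
  have hzero : ∀ u, 𝔼 z, g u z = 0 := fun u => by
    rw [Fintype.expect_eq_sum_div_card, hmarg, zero_div]
  simp only [Fin.prod_univ_two, add_mul, mul_add, one_mul, mul_one, expect_add_distrib,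
    Fintype.expect_const, hzero, zero_add, add_zero]

/-- if `‖g‖_{U(2,p)}² ≥ ε` for some even `p`, `ε ∈ (0,1/2]`, and `g` has
all marginals `E_z g(x,z) = 0`, then `‖1+g‖_{U(2,p')} ≥ 1 + ε/5` for every even `p' ≥ 2p/ε`. -/
theorem stmt_6 {X Y : Type*} [Fintype X] [Fintype Y] [Nonempty X] [Nonempty Y]
    (g : X → Y → ℝ)
    (p : ℕ) (hpeven : Even p) (hp2 : 2 ≤ p)
    (ε : ℝ) (hε : ε ∈ Set.Ioc (0 : ℝ) (1 / 2))
    (hnorm : gridNorm 2 p g ^ 2 ≥ ε)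
    (hmarg : ∀ x, (∑ z, g x z) = 0)
    (p' : ℕ) (hp'even : Even p') (hp' : (p' : ℝ) ≥ 2 * p / ε) :
    gridNorm 2 p' (fun x y => 1 + g x y) ≥ 1 + ε / 5 := by
  obtain ⟨hε0, hε⟩ := hε
  set b : (Fin 2 → X) → ℝ := fun x => 𝔼 z, ∏ i, g (x i) z
  have hmom : ∀ s, 0 ≤ 𝔼 x, b x ^ s := fun s => by
    rw [← expect_grid_eq_expect_pow_left]; exact expect_grid_nonneg even_two s g
  have hp2' : (2 : ℝ) ≤ p := by exact_mod_cast hp2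
  have hpn : 2 * (p : ℝ) ≤ ε * p' := by
    rw [ge_iff_le, div_le_iff₀ hε0] at hp'; linarith
  have hp'0 : p' ≠ 0 := by rintro rfl; norm_num at hpn; linarith
  have hb : ε ^ p ≤ 𝔼 x, b x ^ p := by
    have := pow_le_pow_left₀ hε0.le hnorm p
    rwa [← pow_mul, gridNorm_pow two_ne_zero (by omega), expect_grid_eq_expect_pow_left,
      abs_of_nonneg (hmom p)] at this
  have hpow : (1 + ε / 5) ^ (2 * p') ≤ gridNorm 2 p' (fun x y => 1 + g x y) ^ (2 * p') := by
    rw [gridNorm_pow two_ne_zero hp'0,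
      abs_of_nonneg (expect_grid_nonneg even_two p' fun x y => 1 + g x y),
      expect_grid_eq_expect_pow_left 2 p' fun x y => 1 + g x y]
    simp only [expect_prod_one_add_of_sum_eq_zero hmarg]
    calc (1 + ε / 5) ^ (2 * p') ≤ 5 / 18 * (1 + ε) ^ p' := by
          linarith [eighteen_fifths_mul_pow_le hε0.le hε hp'even (by linarith)]
      _ ≤ 𝔼 x, (1 + b x) ^ p' :=
          mul_one_add_pow_le_expect_one_add_pow b (fun s _ => hmom s) hpeven (by omega) hε hpn hb
  exact le_of_pow_le_pow_left₀ (by omega) (Real.rpow_nonneg (abs_nonneg _) _) hpow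
end

section
/- If E_z [f(z)−1]^k ≥ 0 for all odd k ∈ ℕ, and ‖f − 1‖_{k₀} ≥ ε for some even k₀ ≥ 2 and ε ∈ [0, 1/2], then for any integer k' ≥ 2k₀/ε one has ‖f‖_{k'} ≥ 1 + ε/2. -/
open Finset
open scoped BigOperators

/-! Expanding `f = (f - 1) + 1`, `𝔼 f ^ k' = ∑ⱼ C(k', j) 𝔼 (f - 1) ^ j` is a sum of nonnegative
terms: odd centred moments by hypothesis, even ones trivially. By Jensen, `𝔼 (f - 1) ^ (2i) ≥ ε ^ (2i)`
as soon as `2i ≥ k₀`, so `𝔼 f ^ k'` dominates the tail `∑_{2i ≥ k₀} C(k', 2i) ε ^ (2i)` of the even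
part `((1 + ε) ^ k' + (1 - ε) ^ k') / 2` of `(1 + ε) ^ k'`. Since `k' ≥ 2k₀/ε`, consecutive even terms
at least double up to index `k₀`, so the head of the even part is at most its tail, which is
therefore at least `(1 + ε) ^ k' / 4 ≥ (1 + ε / 2) ^ k'`. -/

lemma image_two_mul_Ico_subset_range (m n : ℕ) :
    (Ico m (n / 2 + 1)).image (2 * ·) ⊆ range (n + 1) := by
  intro j
  simp only [mem_image, mem_Ico, mem_range]
  omega

lemma two_mul_sum_choose_even_mul_pow (x : ℝ) (n : ℕ) :
    2 * ∑ i ∈ range (n / 2 + 1), (n.choose (2 * i) : ℝ) * x ^ (2 * i) =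
      (1 + x) ^ n + (1 - x) ^ n := by
  have hparity : (1 + x) ^ n + (1 - x) ^ n =
      ∑ j ∈ range (n + 1), (1 + (-1) ^ j) * ((n.choose j : ℝ) * x ^ j) := by
    rw [add_comm 1 x, sub_eq_neg_add, add_pow, add_pow, ← sum_add_distrib]
    refine sum_congr rfl fun j _ => ?_
    rw [neg_pow]
    ring
  rw [hparity, range_eq_Ico, ← sum_subset (image_two_mul_Ico_subset_range 0 n),
    sum_image fun _ _ _ _ => by omega, mul_sum]
  · refine sum_congr rfl fun i _ => ?_
    rw [(even_two_mul i).neg_one_pow]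
    ring
  · intro j hjn hj
    have hodd : Odd j := Nat.not_even_iff_odd.1 fun ⟨i, hi⟩ =>
      hj (mem_image.2 ⟨i, mem_Ico.2 ⟨by omega, by rw [mem_range] at hjn; omega⟩, by omega⟩)
    rw [hodd.neg_one_pow, add_neg_cancel, zero_mul]

lemma cast_choose_add_two_mul {n j : ℕ} (h : j + 1 ≤ n) :
    (n.choose (j + 2) : ℝ) * ((j + 1) * (j + 2)) = n.choose j * ((n - j) * (n - j - 1)) := by
  have e1 := Nat.choose_succ_right_eq n j
  have e2 := Nat.choose_succ_right_eq n (j + 1)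
  rw [← Nat.cast_inj (R := ℝ)] at e1 e2
  push_cast [Nat.cast_sub h, Nat.cast_sub (by omega : j ≤ n)] at e1 e2
  linear_combination (↑j + 1) * e2 + (↑n - ↑j - 1) * e1

lemma two_mul_choose_mul_pow_le {ε : ℝ} (hε0 : 0 ≤ ε) (hε : ε ≤ 1 / 2) {n j : ℕ}
    (h : 2 * ((j : ℝ) + 2) ≤ ε * n) :
    2 * (n.choose j * ε ^ j) ≤ n.choose (j + 2) * ε ^ (j + 2) := by
  have hjn : j + 1 ≤ n := by
    have : ((j + 1 : ℕ) : ℝ) ≤ n := by push_cast; nlinarith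
    exact_mod_cast this
  have h1 : 3 / 2 * ((j : ℝ) + 2) ≤ ε * (n - j) := by nlinarith
  have h2 : 3 / 2 * ((j : ℝ) + 2) ≤ ε * (n - j - 1) := by nlinarith
  have hsq : 2 * (((j : ℝ) + 1) * (j + 2)) ≤ ε * (n - j) * (ε * (n - j - 1)) := by
    nlinarith [mul_le_mul h1 h2 (by positivity) (by linarith)]
  have key : 2 * n.choose j * (((j : ℝ) + 1) * (j + 2)) ≤
      n.choose (j + 2) * ε ^ 2 * (((j : ℝ) + 1) * (j + 2)) := by
    calc 2 * n.choose j * (((j : ℝ) + 1) * (j + 2))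
        ≤ n.choose j * (ε * (n - j) * (ε * (n - j - 1))) := by
          rw [mul_comm 2, mul_assoc]; gcongr
      _ = n.choose (j + 2) * ε ^ 2 * (((j : ℝ) + 1) * (j + 2)) := by
          rw [mul_right_comm _ (ε ^ 2), cast_choose_add_two_mul hjn]; ring
  have hratio := le_of_mul_le_mul_right key (by positivity)
  calc 2 * (n.choose j * ε ^ j) = 2 * n.choose j * ε ^ j := by ring
    _ ≤ n.choose (j + 2) * ε ^ 2 * ε ^ j := by gcongr
    _ = n.choose (j + 2) * ε ^ (j + 2) := by ring

lemma sum_range_choose_mul_pow_le {ε : ℝ} (hε0 : 0 ≤ ε) (hε : ε ≤ 1 / 2) {n m : ℕ}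
    (h : 4 * (m : ℝ) ≤ ε * n) :
    ∑ i ∈ range m, (n.choose (2 * i) : ℝ) * ε ^ (2 * i) ≤ n.choose (2 * m) * ε ^ (2 * m) := by
  induction m with
  | zero => simp
  | succ m ih =>
    push_cast at h
    rw [sum_range_succ]
    calc _ ≤ 2 * (n.choose (2 * m) * ε ^ (2 * m)) := by linarith [ih (by linarith)]
      _ ≤ _ := two_mul_choose_mul_pow_le hε0 hε (by push_cast; linarith)

lemma one_add_mul_add_sq_add_cube_le_pow (n : ℕ) {x : ℝ} (hx : 0 ≤ x) :
    1 + n * x + n * ((n : ℝ) - 1) / 2 * x ^ 2 + n * ((n : ℝ) - 1) * ((n : ℝ) - 2) / 6 * x ^ 3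
      ≤ (1 + x) ^ n := by
  induction n with
  | zero => simp
  | succ n ih =>
    have hn2 : (0 : ℝ) ≤ n * ((n : ℝ) - 1) := by
      rcases n with _ | n
      · simp
      · push_cast; ring_nf; positivity
    have hn3 : (0 : ℝ) ≤ n * ((n : ℝ) - 1) * ((n : ℝ) - 2) := by
      rcases n with _ | _ | n
      · simp
      · simp
      · push_cast; ring_nf; positivity
    have h4 : 0 ≤ n * ((n : ℝ) - 1) * ((n : ℝ) - 2) * x ^ 4 := mul_nonneg hn3 (by positivity)
    have h3 : 0 ≤ n * ((n : ℝ) - 1) * x ^ 3 := mul_nonneg hn2 (by positivity)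
    push_cast
    calc _ ≤ (1 + n * x + n * ((n : ℝ) - 1) / 2 * x ^ 2
            + n * ((n : ℝ) - 1) * ((n : ℝ) - 2) / 6 * x ^ 3) * (1 + x) := by nlinarith
      _ ≤ (1 + x) ^ n * (1 + x) := by gcongr
      _ = (1 + x) ^ (n + 1) := by ring

lemma four_le_one_add_pow {x : ℝ} (hx0 : 0 ≤ x) (hx : x ≤ 1 / 5) {n : ℕ} (hn : 8 / 5 ≤ n * x) :
    4 ≤ (1 + x) ^ n := by
  -- the quadratic Bernoulli bound only gives `1 + 8/5 + 28/25 < 4` here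
  refine le_trans ?_ (one_add_mul_add_sq_add_cube_le_pow n hx0)
  have h1 : 7 / 5 ≤ n * x - x := by linarith
  have h2 : 6 / 5 ≤ n * x - 2 * x := by linarith
  have h12 := mul_le_mul hn h1 (by norm_num) (by linarith)
  have h123 := mul_le_mul h12 h2 (by norm_num) (by nlinarith)
  nlinarith

lemma four_mul_one_add_half_pow_le {ε : ℝ} (hε0 : 0 ≤ ε) (hε : ε ≤ 1 / 2) {n : ℕ}
    (hn : 4 ≤ ε * n) : 4 * (1 + ε / 2) ^ n ≤ (1 + ε) ^ n :=
  calc 4 * (1 + ε / 2) ^ n ≤ (1 + 2 * ε / 5) ^ n * (1 + ε / 2) ^ n := by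
        gcongr
        exact four_le_one_add_pow (by positivity) (by linarith) (by linarith)
    _ = ((1 + 2 * ε / 5) * (1 + ε / 2)) ^ n := (mul_pow _ _ _).symm
    _ ≤ (1 + ε) ^ n := by gcongr; nlinarith

lemma one_add_half_pow_le_sum_Ico_choose_mul_pow {ε : ℝ} (hε0 : 0 ≤ ε) (hε : ε ≤ 1 / 2)
    {n m : ℕ} (hm : 1 ≤ m) (h : 4 * (m : ℝ) ≤ ε * n) :
    (1 + ε / 2) ^ n ≤ ∑ i ∈ Ico m (n / 2 + 1), (n.choose (2 * i) : ℝ) * ε ^ (2 * i) := by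
  have hmn : m ≤ n / 2 := by
    have : ((8 * m : ℕ) : ℝ) ≤ n := by push_cast; nlinarith
    have : 8 * m ≤ n := by exact_mod_cast this
    omega
  have hsplit := sum_range_add_sum_Ico (fun i => (n.choose (2 * i) : ℝ) * ε ^ (2 * i))
    (by omega : m ≤ n / 2 + 1)
  have hmid : (n.choose (2 * m) : ℝ) * ε ^ (2 * m) ≤
      ∑ i ∈ Ico m (n / 2 + 1), (n.choose (2 * i) : ℝ) * ε ^ (2 * i) :=
    single_le_sum (f := fun i => (n.choose (2 * i) : ℝ) * ε ^ (2 * i)) (fun _ _ => by positivity)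
      (mem_Ico.2 ⟨le_rfl, by omega⟩)
  have hm1 : (1 : ℝ) ≤ m := by exact_mod_cast hm
  have heven := two_mul_sum_choose_even_mul_pow ε n
  have hhead := sum_range_choose_mul_pow_le hε0 hε h
  have hfour := four_mul_one_add_half_pow_le hε0 hε (n := n) (by linarith)
  have hminus := pow_nonneg (by linarith : 0 ≤ 1 - ε) n
  linarith

section Moments

variable {ι : Type*} {s : Finset ι}

lemma rpow_expect_le_expect_rpow_s7 {h : ι → ℝ} (hh : ∀ i ∈ s, 0 ≤ h i) {p : ℝ} (hp : 1 ≤ p) :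
    (𝔼 i ∈ s, h i) ^ p ≤ 𝔼 i ∈ s, h i ^ p := by
  rcases s.eq_empty_or_nonempty with rfl | hs
  · simp [Real.zero_rpow (by positivity : p ≠ 0)]
  have hw : ∑ _i ∈ s, (#s : ℝ)⁻¹ = 1 := by
    rw [sum_const, nsmul_eq_mul, mul_inv_cancel₀ (by exact_mod_cast hs.card_pos.ne')]
  simpa only [expect_eq_sum_div_card, div_eq_inv_mul, mul_sum] using
    Real.rpow_arith_mean_le_arith_mean_rpow s _ h (fun _ _ => by positivity) hw hh hp

lemma pow_le_expect_abs_pow_of_le {g : ι → ℝ} {ε : ℝ} (hε : 0 ≤ ε) {k j : ℕ} (hk : 0 < k)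
    (hkj : k ≤ j) (h : ε ^ k ≤ 𝔼 i ∈ s, |g i| ^ k) : ε ^ j ≤ 𝔼 i ∈ s, |g i| ^ j := by
  have hk' : (0 : ℝ) < k := by exact_mod_cast hk
  have hp : (k : ℝ) * (j / k) = j := by field_simp
  have hpow : ∀ x : ℝ, 0 ≤ x → (x ^ k) ^ ((j : ℝ) / k) = x ^ j := fun x hx => by
    rw [← Real.rpow_natCast x k, ← Real.rpow_mul hx, hp, Real.rpow_natCast]
  calc ε ^ j = (ε ^ k) ^ ((j : ℝ) / k) := (hpow ε hε).symm
    _ ≤ (𝔼 i ∈ s, |g i| ^ k) ^ ((j : ℝ) / k) := by gcongr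
    _ ≤ 𝔼 i ∈ s, (|g i| ^ k) ^ ((j : ℝ) / k) :=
        rpow_expect_le_expect_rpow_s7 (fun _ _ => by positivity)
          ((one_le_div hk').2 (by exact_mod_cast hkj))
    _ = 𝔼 i ∈ s, |g i| ^ j := expect_congr rfl fun i _ => hpow _ (abs_nonneg _)

lemma expect_pow_eq_sum_choose_mul_expect (f : ι → ℝ) (n : ℕ) :
    𝔼 i ∈ s, f i ^ n = ∑ j ∈ range (n + 1), (n.choose j : ℝ) * 𝔼 i ∈ s, (f i - 1) ^ j := by
  simp_rw [mul_expect, ← expect_sum_comm]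
  refine expect_congr rfl fun i _ => ?_
  rw [← sub_add_cancel (f i) 1, add_pow, sub_add_cancel]
  exact sum_congr rfl fun j _ => by ring

lemma sum_Ico_choose_mul_expect_le_expect_pow {f : ι → ℝ}
    (hM : ∀ j, 0 ≤ 𝔼 i ∈ s, (f i - 1) ^ j) (n m : ℕ) :
    ∑ i ∈ Ico m (n / 2 + 1), (n.choose (2 * i) : ℝ) * 𝔼 z ∈ s, (f z - 1) ^ (2 * i) ≤
      𝔼 z ∈ s, f z ^ n := by
  rw [expect_pow_eq_sum_choose_mul_expect,
    ← sum_image (f := fun j => (n.choose j : ℝ) * 𝔼 z ∈ s, (f z - 1) ^ j) fun _ _ _ _ => by omega]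
  refine sum_le_sum_of_subset_of_nonneg ?_ fun j _ _ => mul_nonneg (Nat.cast_nonneg _) (hM j)
  exact image_two_mul_Ico_subset_range m n

lemma one_le_expect_pow (hs : s.Nonempty) {f : ι → ℝ} (hM : ∀ j, 0 ≤ 𝔼 i ∈ s, (f i - 1) ^ j)
    (n : ℕ) : 1 ≤ 𝔼 i ∈ s, f i ^ n := by
  rw [expect_pow_eq_sum_choose_mul_expect]
  simpa [expect_const hs] using
    single_le_sum (fun j _ => mul_nonneg (Nat.cast_nonneg (n.choose j)) (hM j))
      (mem_range.2 n.succ_pos)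

end Moments

/-- Kelley–Meka, Proposition 5.7: if all odd centered moments of `f` are
nonnegative and `‖f − 1‖_{k₀} ≥ ε`, then `‖f‖_{k'} ≥ 1 + ε/2` for every `k' ≥ 2k₀/ε`. -/
theorem stmt_7 {Ω : Type*} [Fintype Ω] [Nonempty Ω] (f : Ω → ℝ)
    (hodd : ∀ k : ℕ, Odd k → 0 ≤ (∑ z, (f z - 1) ^ k) / (Fintype.card Ω))
    (k₀ : ℕ) (hk₀even : Even k₀) (hk₀2 : 2 ≤ k₀)
    (ε : ℝ) (hε0 : 0 ≤ ε) (hε2 : ε ≤ 1 / 2)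
    (hnorm : ((∑ z, |f z - 1| ^ (k₀ : ℝ)) / (Fintype.card Ω)) ^ (1 / (k₀ : ℝ)) ≥ ε)
    (k' : ℕ) (hk' : (k' : ℝ) ≥ 2 * k₀ / ε) :
    ((∑ z, |f z| ^ (k' : ℝ)) / (Fintype.card Ω)) ^ (1 / (k' : ℝ)) ≥ 1 + ε / 2 := by
  simp_rw [← Fintype.expect_eq_sum_div_card] at hodd hnorm ⊢
  simp_rw [Real.rpow_natCast] at hnorm ⊢
  have hM (j : ℕ) : 0 ≤ 𝔼 z, (f z - 1) ^ j :=
    (Nat.even_or_odd j).elim (fun hj => expect_nonneg fun z _ => hj.pow_nonneg _) (hodd j)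
  have hpow : 𝔼 z, f z ^ k' ≤ 𝔼 z, |f z| ^ k' :=
    expect_le_expect fun z _ => (le_abs_self _).trans (pow_abs _ _).ge
  rcases hε0.eq_or_lt with rfl | hε
  · simpa using
      Real.one_le_rpow ((one_le_expect_pow univ_nonempty hM k').trans hpow) (by positivity)
  obtain ⟨m, rfl⟩ := hk₀even
  have hm : 4 * (m : ℝ) ≤ ε * k' := by
    rw [ge_iff_le, div_le_iff₀ hε] at hk'
    push_cast at hk'
    linarith
  have hk'_pos : (0 : ℝ) < k' := by
    have : (1 : ℝ) ≤ m := by exact_mod_cast (by omega : 1 ≤ m)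
    nlinarith
  have hε_moment : ε ^ (m + m) ≤ 𝔼 z, |f z - 1| ^ (m + m) := by
    rwa [ge_iff_le, one_div, Real.le_rpow_inv_iff_of_pos hε0
      (expect_nonneg fun _ _ => by positivity) (by positivity), Real.rpow_natCast] at hnorm
  have hmoments : ∀ i ∈ Ico m (k' / 2 + 1),
      (k'.choose (2 * i) : ℝ) * ε ^ (2 * i) ≤ k'.choose (2 * i) * 𝔼 z, (f z - 1) ^ (2 * i) := by
    intro i hi
    rw [mem_Ico] at hi
    gcongr
    exact (pow_le_expect_abs_pow_of_le hε0 (by omega) (by omega) hε_moment).trans_eq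
      (expect_congr rfl fun z _ => (even_two_mul i).pow_abs _)
  have hmain : (1 + ε / 2) ^ k' ≤ 𝔼 z, |f z| ^ k' :=
    (one_add_half_pow_le_sum_Ico_choose_mul_pow hε0 hε2 (by omega) hm).trans <|
      (sum_le_sum hmoments).trans <| (sum_Ico_choose_mul_expect_le_expect_pow hM k' m).trans hpow
  rwa [ge_iff_le, one_div, Real.le_rpow_inv_iff_of_pos (by positivity)
    (expect_nonneg fun _ _ => by positivity) hk'_pos, Real.rpow_natCast]
end

section
/- Triangle/seminorm property of grid norms: for even positive integers k and p, the map f ↦ ‖f‖_{U(k,p)} is a seminorm on real-valued functions on X × Y; in particular ‖f + g‖_{U(k,p)} ≤ ‖f‖_{U(k,p)} + ‖g‖_{U(k,p)} for all f, g : X × Y → ℝ. -/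
/-!
Expanding `∏ (f + g)` over the `k × p` grid writes the `kp`-th power of `‖f + g‖_{U(k,p)}`
as a sum of `2^{kp}` mixed grid sums; by Gowers–Cauchy–Schwarz each is at most the
corresponding product of `‖f‖` and `‖g‖`, and these products add up to `(‖f‖ + ‖g‖)^{kp}`.
Gowers–Cauchy–Schwarz itself is Hölder's inequality with exponent `p` over the columns
followed by Hölder with exponent `k` over the rows; evenness of `p` and `k` turns the
resulting power sums back into nonnegative grid sums.
-/

open Finset

section Holder

variable {ι : Type*} {n : ℕ}

theorem prod_le_sum_pow_div (hn : n ≠ 0) {v : Fin n → ℝ} (hv : ∀ j, 0 ≤ v j) :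
    ∏ j, v j ≤ (∑ j, v j ^ n) / n := by
  have hw : ∑ _j : Fin n, (n : ℝ)⁻¹ = 1 := by simp [hn]
  calc ∏ j, v j = ∏ j, (v j ^ n) ^ (n : ℝ)⁻¹ :=
        prod_congr rfl fun j _ => (Real.pow_rpow_inv_natCast (hv j) hn).symm
    _ ≤ ∑ j, (n : ℝ)⁻¹ * v j ^ n :=
        Real.geom_mean_le_arith_mean_weighted _ _ _ (fun _ _ => by positivity) hw
          fun j _ => pow_nonneg (hv j) n
    _ = (∑ j, v j ^ n) / n := by rw [← mul_sum, inv_mul_eq_div]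

theorem sum_prod_le_one_of_sum_pow_eq_one (s : Finset ι) (hn : n ≠ 0) {u : Fin n → ι → ℝ}
    (hu : ∀ j, ∀ i ∈ s, 0 ≤ u j i) (hu₁ : ∀ j, ∑ i ∈ s, u j i ^ n = 1) :
    ∑ i ∈ s, ∏ j, u j i ≤ 1 :=
  calc ∑ i ∈ s, ∏ j, u j i ≤ ∑ i ∈ s, (∑ j, u j i ^ n) / n :=
        sum_le_sum fun i hi => prod_le_sum_pow_div hn fun j => hu j i hi
    _ = 1 := by simp [← sum_div, sum_comm (s := s), hu₁, hn]

theorem sum_prod_le_prod_sum_pow_rpow (s : Finset ι) (hn : n ≠ 0) {u : Fin n → ι → ℝ}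
    (hu : ∀ j, ∀ i ∈ s, 0 ≤ u j i) :
    ∑ i ∈ s, ∏ j, u j i ≤ ∏ j, (∑ i ∈ s, u j i ^ n) ^ (n : ℝ)⁻¹ := by
  set N : Fin n → ℝ := fun j => (∑ i ∈ s, u j i ^ n) ^ (n : ℝ)⁻¹
  have hA : ∀ j, 0 ≤ ∑ i ∈ s, u j i ^ n := fun j =>
    sum_nonneg fun i hi => pow_nonneg (hu j i hi) n
  by_cases! hN : ∃ j, N j = 0
  · obtain ⟨j₀, hj₀⟩ := hN
    have hu₀ : ∀ i ∈ s, u j₀ i = 0 := fun i hi =>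
      pow_eq_zero_iff hn |>.1 <|
        (sum_eq_zero_iff_of_nonneg fun i hi => pow_nonneg (hu j₀ i hi) n).1
          ((Real.rpow_eq_zero (hA j₀) (by positivity)).1 hj₀) i hi
    rw [sum_eq_zero fun i hi => prod_eq_zero (mem_univ j₀) (hu₀ i hi)]
    exact prod_nonneg fun j _ => Real.rpow_nonneg (hA j) _
  have hN₀ : ∀ j, 0 < N j := fun j => (Real.rpow_nonneg (hA j) _).lt_of_ne' (hN j)
  have hnormal : ∑ i ∈ s, ∏ j, u j i / N j ≤ 1 := by
    refine sum_prod_le_one_of_sum_pow_eq_one s hn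
      (fun j i hi => div_nonneg (hu j i hi) (hN₀ j).le) fun j => ?_
    simp only [div_pow, ← sum_div, N, Real.rpow_inv_natCast_pow (hA j) hn]
    exact div_self (Real.rpow_inv_natCast_pow (hA j) hn ▸ pow_ne_zero n (hN₀ j).ne')
  calc ∑ i ∈ s, ∏ j, u j i = (∏ j, N j) * ∑ i ∈ s, ∏ j, u j i / N j := by
        simp only [mul_sum, ← prod_mul_distrib, mul_div_cancel₀ _ (hN₀ _).ne']
    _ ≤ ∏ j, N j := mul_le_of_le_one_right (prod_nonneg fun j _ => (hN₀ j).le) hnormal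

theorem abs_sum_prod_le_prod_sum_pow_rpow (s : Finset ι) (hn : Even n) (hn₀ : n ≠ 0)
    (u : Fin n → ι → ℝ) :
    |∑ i ∈ s, ∏ j, u j i| ≤ ∏ j, (∑ i ∈ s, u j i ^ n) ^ (n : ℝ)⁻¹ :=
  calc |∑ i ∈ s, ∏ j, u j i| ≤ ∑ i ∈ s, ∏ j, |u j i| :=
        (abs_sum_le_sum_abs (fun i => ∏ j, u j i) s).trans_eq (by simp only [abs_prod])
    _ ≤ ∏ j, (∑ i ∈ s, |u j i| ^ n) ^ (n : ℝ)⁻¹ :=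
        sum_prod_le_prod_sum_pow_rpow s hn₀ fun j i _ => abs_nonneg _
    _ = ∏ j, (∑ i ∈ s, u j i ^ n) ^ (n : ℝ)⁻¹ := by simp only [hn.pow_abs]

end Holder

theorem prod_prod_sum_eq_sum_prod_prod {α β κ R : Type*} [Fintype α] [Fintype β] [Fintype κ]
    [DecidableEq α] [DecidableEq β] [CommSemiring R] (F : α → β → κ → R) :
    ∏ a, ∏ b, ∑ c, F a b c = ∑ ε : α → β → κ, ∏ a, ∏ b, F a b (ε a b) := by
  simp only [Fintype.prod_sum]

section Grid

variable {X Y : Type*} [Fintype X] [Fintype Y] {k p : ℕ}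

def gridSum (k p : ℕ) (F : Fin k → Fin p → X → Y → ℝ) : ℝ :=
  ∑ x : Fin k → X, ∑ y : Fin p → Y, ∏ i, ∏ j, F i j (x i) (y j)

/-- `|X|^k |Y|^p U_{k,p}(f)`. -/
def gridMoment (k p : ℕ) (f : X → Y → ℝ) : ℝ :=
  gridSum k p fun _ _ => f

theorem gridSum_eq_sum_prod_sum_left (F : Fin k → Fin p → X → Y → ℝ) :
    gridSum k p F = ∑ y : Fin p → Y, ∏ i, ∑ x : X, ∏ j, F i j x (y j) := by
  rw [gridSum, sum_comm]
  exact sum_congr rfl fun y _ => (Fintype.prod_sum fun i x => ∏ j, F i j x (y j)).symm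

theorem gridSum_eq_sum_prod_sum_right (F : Fin k → Fin p → X → Y → ℝ) :
    gridSum k p F = ∑ x : Fin k → X, ∏ j, ∑ y : Y, ∏ i, F i j (x i) y := by
  refine sum_congr rfl fun x _ => ?_
  rw [Fintype.prod_sum]
  exact sum_congr rfl fun y _ => prod_comm

theorem gridSum_rowConst (G : Fin k → X → Y → ℝ) :
    gridSum k p (fun i _ => G i) = ∑ x : Fin k → X, (∑ y : Y, ∏ i, G i (x i) y) ^ p := by
  simp [gridSum_eq_sum_prod_sum_right]

theorem gridMoment_eq_sum_pow (f : X → Y → ℝ) :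
    gridMoment k p f = ∑ y : Fin p → Y, (∑ x : X, ∏ j, f x (y j)) ^ k := by
  simp [gridMoment, gridSum_eq_sum_prod_sum_left]

theorem gridMoment_nonneg (hk : Even k) (f : X → Y → ℝ) : 0 ≤ gridMoment k p f := by
  rw [gridMoment_eq_sum_pow]
  exact sum_nonneg fun y _ => hk.pow_nonneg _

theorem abs_gridSum_rowConst_le (hk : Even k) (hk₀ : k ≠ 0) (G : Fin k → X → Y → ℝ) :
    |gridSum k p fun i _ => G i| ≤ ∏ i, gridMoment k p (G i) ^ (k : ℝ)⁻¹ := by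
  rw [gridSum_eq_sum_prod_sum_left]
  simpa only [gridMoment_eq_sum_pow] using abs_sum_prod_le_prod_sum_pow_rpow _ hk hk₀ _

/-- The Gowers–Cauchy–Schwarz inequality. -/
theorem abs_gridSum_le (hk : Even k) (hk₀ : k ≠ 0) (hp : Even p) (hp₀ : p ≠ 0)
    (F : Fin k → Fin p → X → Y → ℝ) :
    |gridSum k p F| ≤ ∏ i, ∏ j, gridMoment k p (F i j) ^ ((k : ℝ) * p)⁻¹ := by
  have hrowConst : ∀ j, 0 ≤ gridSum k p fun i _ => F i j := fun j => by
    rw [gridSum_rowConst]; exact sum_nonneg fun x _ => hp.pow_nonneg _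
  rw [gridSum_eq_sum_prod_sum_right]
  calc _ ≤ ∏ j, (gridSum k p fun i _ => F i j) ^ (p : ℝ)⁻¹ := by
        simpa only [gridSum_rowConst] using abs_sum_prod_le_prod_sum_pow_rpow _ hp hp₀ _
    _ ≤ ∏ j, (∏ i, gridMoment k p (F i j) ^ (k : ℝ)⁻¹) ^ (p : ℝ)⁻¹ := by
        refine prod_le_prod (fun j _ => Real.rpow_nonneg (hrowConst j) _) fun j _ => ?_
        exact Real.rpow_le_rpow (hrowConst j)
          ((le_abs_self _).trans (abs_gridSum_rowConst_le hk hk₀ _)) (by positivity)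
    _ = _ := by
        rw [prod_comm]
        refine prod_congr rfl fun j _ => ?_
        rw [← Real.finsetProd_rpow _ _ fun i _ => Real.rpow_nonneg (gridMoment_nonneg hk _) _]
        simp only [← Real.rpow_mul (gridMoment_nonneg hk _), mul_inv]

theorem gridSum_sum {ι : Type*} [Fintype ι] (F : ι → Fin k → Fin p → X → Y → ℝ) :
    gridSum k p (fun i j x y => ∑ c, F c i j x y) =
      ∑ ε : Fin k → Fin p → ι, gridSum k p fun i j => F (ε i j) i j := by
  simp only [gridSum, prod_prod_sum_eq_sum_prod_prod]
  exact (sum_congr rfl fun x _ => sum_comm).trans sum_comm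

theorem gridMoment_sum_rpow_le (hk : Even k) (hk₀ : k ≠ 0) (hp : Even p) (hp₀ : p ≠ 0)
    {ι : Type*} [Fintype ι] (h : ι → X → Y → ℝ) :
    gridMoment k p (fun x y => ∑ c, h c x y) ^ ((k : ℝ) * p)⁻¹ ≤
      ∑ c, gridMoment k p (h c) ^ ((k : ℝ) * p)⁻¹ := by
  set N : ι → ℝ := fun c => gridMoment k p (h c) ^ ((k : ℝ) * p)⁻¹
  have hN : 0 ≤ ∑ c, N c := sum_nonneg fun c _ => Real.rpow_nonneg (gridMoment_nonneg hk _) _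
  have hexpand : gridMoment k p (fun x y => ∑ c, h c x y) ≤ (∑ c, N c) ^ (k * p) :=
    calc gridMoment k p (fun x y => ∑ c, h c x y)
        = ∑ ε : Fin k → Fin p → ι, gridSum k p fun i j => h (ε i j) :=
          gridSum_sum fun c _ _ => h c
      _ ≤ ∑ ε : Fin k → Fin p → ι, ∏ i, ∏ j, N (ε i j) :=
          sum_le_sum fun ε _ => (le_abs_self _).trans (abs_gridSum_le hk hk₀ hp hp₀ _)
      _ = ∏ _i : Fin k, ∏ _j : Fin p, ∑ c, N c := (prod_prod_sum_eq_sum_prod_prod _).symm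
      _ = (∑ c, N c) ^ (k * p) := by simp [pow_mul']
  calc _ ≤ ((∑ c, N c) ^ (k * p)) ^ ((k : ℝ) * p)⁻¹ :=
        Real.rpow_le_rpow (gridMoment_nonneg hk _) hexpand (by positivity)
    _ = ∑ c, N c := by
        rw [← Nat.cast_mul]; exact Real.pow_rpow_inv_natCast hN (mul_ne_zero hk₀ hp₀)

theorem gridMoment_add_rpow_le (hk : Even k) (hk₀ : k ≠ 0) (hp : Even p) (hp₀ : p ≠ 0)
    (f g : X → Y → ℝ) :
    gridMoment k p (fun x y => f x y + g x y) ^ ((k : ℝ) * p)⁻¹ ≤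
      gridMoment k p f ^ ((k : ℝ) * p)⁻¹ + gridMoment k p g ^ ((k : ℝ) * p)⁻¹ := by
  simpa using gridMoment_sum_rpow_le hk hk₀ hp hp₀ ![f, g]

theorem gridMoment_const_mul (c : ℝ) (f : X → Y → ℝ) :
    gridMoment k p (fun x y => c * f x y) = c ^ (k * p) * gridMoment k p f := by
  simp [gridMoment, gridSum, mul_sum, prod_mul_distrib, pow_mul']

theorem gridMoment_const_mul_rpow (hk : Even k) (hk₀ : k ≠ 0) (hp₀ : p ≠ 0) (c : ℝ)
    (f : X → Y → ℝ) :
    gridMoment k p (fun x y => c * f x y) ^ ((k : ℝ) * p)⁻¹ =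
      |c| * gridMoment k p f ^ ((k : ℝ) * p)⁻¹ := by
  rw [gridMoment_const_mul, ← (hk.mul_right p).pow_abs,
    Real.mul_rpow (by positivity) (gridMoment_nonneg hk f), ← Nat.cast_mul,
    Real.pow_rpow_inv_natCast (abs_nonneg c) (mul_ne_zero hk₀ hp₀)]

theorem gridNorm_eq_div (hk : Even k) (f : X → Y → ℝ) :
    gridNorm k p f = gridMoment k p f ^ ((k : ℝ) * p)⁻¹ /
      ((Fintype.card X : ℝ) ^ k * (Fintype.card Y : ℝ) ^ p) ^ ((k : ℝ) * p)⁻¹ := by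
  rw [gridNorm, one_div, ← Real.div_rpow (gridMoment_nonneg hk f) (by positivity)]
  exact congrArg (· ^ _) (abs_of_nonneg (div_nonneg (gridMoment_nonneg hk f) (by positivity)))

end Grid

theorem stmt_14_general {X Y : Type*} [Fintype X] [Fintype Y]
    (k p : ℕ) (hkeven : Even k) (hk : 0 < k) (hpeven : Even p) (hp : 0 < p) :
    (∀ (c : ℝ) (f : X → Y → ℝ),
        gridNorm k p (fun x y => c * f x y) = |c| * gridNorm k p f) ∧
    (∀ f g : X → Y → ℝ,
        gridNorm k p (fun x y => f x y + g x y) ≤ gridNorm k p f + gridNorm k p g) := by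
  refine ⟨fun c f => ?_, fun f g => ?_⟩
  · simp only [gridNorm_eq_div hkeven, gridMoment_const_mul_rpow hkeven hk.ne' hp.ne',
      mul_div_assoc]
  · simp only [gridNorm_eq_div hkeven, ← add_div]
    gcongr
    exact gridMoment_add_rpow_le hkeven hk.ne' hpeven hp.ne' f g

/-- for even positive `k` and `p`, `f ↦ ‖f‖_{U(k,p)}` is a seminorm:
it is absolutely homogeneous and satisfies the triangle inequality. -/
theorem stmt_14 {X Y : Type*} [Fintype X] [Fintype Y] [Nonempty X] [Nonempty Y]
    (k p : ℕ) (hkeven : Even k) (hk : 0 < k) (hpeven : Even p) (hp : 0 < p) :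
    (∀ (c : ℝ) (f : X → Y → ℝ),
        gridNorm k p (fun x y => c * f x y) = |c| * gridNorm k p f) ∧
    (∀ f g : X → Y → ℝ,
        gridNorm k p (fun x y => f x y + g x y) ≤ gridNorm k p f + gridNorm k p g) :=
  stmt_14_general k p hkeven hk hpeven hp
end

section
/- Spreadness of a quadratic-phase function in 𝔽^n: let 𝔽 be a finite field of prime order, n even, Q(y) = y₁y₂ + y₃y₄ + ⋯ + y_{n−1}y_n, and f : 𝔽^n → [0,1] defined by f(x) = 1/2 + Σ_{0≠γ∈𝔽} (1/(2|𝔽|)) e_𝔽(γ Q(x)), where e_𝔽(t) = e^{2πi t/|𝔽|} (so f is real-valued). Then every nontrivial Fourier coefficient of f satisfies |f̂(χ)| ≤ e^{−cn} for an absolute constant c > 0 depending only on |𝔽|; consequently, for all S, T ⊆ 𝔽^n, |E_{x,y ∈ 𝔽^n} 1_S(x)(f(x+y) − E[f]) 1_T(y)| ≤ e^{−cn} √(|S||T|)/|𝔽|^n. -/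
/-!
For `χ ≠ 0` the Fourier coefficient `f̂(χ)` is a combination, of total weight `(q - 1)/(2q)`, of
the Gauss sums `∑ₓ e(γ Q(x) - χ ⬝ᵥ x)` with `γ ≠ 0` (the constant `1/2` only feeds `f̂(0)`).
Grouping the coordinates in pairs turns each of them into a product of `n/2` sums
`∑_{a,b} e(γab - αa - βb)`, and each of those has modulus `q`, because summing over `a` forces
`b = α/γ`. Hence `|f̂(χ)| ≤ q^{-n/2} = e^{-cn}` with `c = (log q)/2`. Expanding `f - E f` in
characters, the bilinear form is bounded by Cauchy–Schwarz and Parseval,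
`∑_χ |∑_{x ∈ S} e(χ ⬝ᵥ x)|² = qⁿ |S|`.
-/

open Finset

noncomputable def eF (q : ℕ) [NeZero q] (t : ZMod q) : ℂ :=
  Complex.exp (2 * Real.pi * Complex.I * (t.val : ℂ) / (q : ℂ))

def quadQ (q n : ℕ) (y : Fin n → ZMod q) : ZMod q :=
  ∑ i : Fin n, if h : (i : ℕ) % 2 = 0 ∧ (i : ℕ) + 1 < n then y i * y ⟨(i : ℕ) + 1, h.2⟩ else 0

noncomputable def quadF (q n : ℕ) [NeZero q] [DecidableEq (ZMod q)]
    (x : Fin n → ZMod q) : ℂ :=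
  1 / 2 + ∑ γ ∈ Finset.univ.filter (fun γ : ZMod q => γ ≠ 0),
      (1 / (2 * (q : ℂ))) * eF q (γ * quadQ q n x)

lemma eF_eq_stdAddChar (q : ℕ) [NeZero q] : eF q = ZMod.stdAddChar := by
  funext t
  rw [eF, ZMod.stdAddChar_apply, ZMod.toCircle_apply]

namespace AddChar

variable {A M : Type*} [AddCommMonoid A] [CommMonoid M]

lemma map_sum_eq_prod {ι : Type*} (ψ : AddChar A M) (s : Finset ι) (f : ι → A) :
    ψ (∑ i ∈ s, f i) = ∏ i ∈ s, ψ (f i) := by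
  classical
  induction s using Finset.induction_on with
  | empty => simp
  | insert i s hi ih => rw [sum_insert hi, prod_insert hi, map_add_eq_mul, ih]

end AddChar

section DotFourier

variable {R ι : Type*} [CommRing R] [Fintype ι] {ψ : AddChar R ℂ}

lemma AddChar.apply_dotProduct_mul_apply_neg_dotProduct (ψ : AddChar R ℂ) (χ x y : ι → R) :
    ψ (χ ⬝ᵥ x) * ψ (-(χ ⬝ᵥ y)) = ψ ((x - y) ⬝ᵥ χ) := by
  rw [← map_add_eq_mul, ← sub_eq_add_neg, ← dotProduct_sub, dotProduct_comm]

variable [Fintype R] [DecidableEq ι]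

/-- `f̂(χ) = E_x f(x) ψ(-χ ⬝ᵥ x)`: the characters of `ι → R` are indexed by `ι → R` itself
through the dot product. -/
noncomputable def dotFourierCoeff (ψ : AddChar R ℂ) (g : (ι → R) → ℂ) (χ : ι → R) : ℂ :=
  (∑ x, g x * ψ (-(χ ⬝ᵥ x))) / Fintype.card (ι → R)

lemma dotFourierCoeff_zero (ψ : AddChar R ℂ) (g : (ι → R) → ℂ) :
    dotFourierCoeff ψ g 0 = (∑ x, g x) / Fintype.card (ι → R) := by
  simp [dotFourierCoeff]

variable [DecidableEq R]

lemma AddChar.sum_apply_dotProduct (hψ : ψ.IsPrimitive) (χ : ι → R) :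
    ∑ x : ι → R, ψ (χ ⬝ᵥ x) = if χ = 0 then (Fintype.card (ι → R) : ℂ) else 0 := by
  have factor (i : ι) : ∑ a : R, ψ (χ i * a) = if χ i = 0 then (Fintype.card R : ℂ) else 0 := by
    simpa only [mul_comm (χ i), Nat.cast_ite, Nat.cast_zero] using AddChar.sum_mulShift (χ i) hψ
  simp_rw [dotProduct, ψ.map_sum_eq_prod]
  rw [← Fintype.prod_sum fun i a => ψ (χ i * a)]
  simp_rw [factor, prod_ite_zero]
  simp [funext_iff]

lemma AddChar.sum_apply_sub_dotProduct (hψ : ψ.IsPrimitive) (x y : ι → R) :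
    ∑ χ : ι → R, ψ ((x - y) ⬝ᵥ χ) = if x = y then (Fintype.card (ι → R) : ℂ) else 0 := by
  simp only [ψ.sum_apply_dotProduct hψ, sub_eq_zero]

lemma dotFourierCoeff_sub_const (hψ : ψ.IsPrimitive) (g : (ι → R) → ℂ) (c : ℂ) (χ : ι → R) :
    dotFourierCoeff ψ (fun x => g x - c) χ = dotFourierCoeff ψ g χ - if χ = 0 then c else 0 := by
  have hN : (Fintype.card (ι → R) : ℂ) ≠ 0 := Nat.cast_ne_zero.mpr Fintype.card_ne_zero
  have hconst : ∑ x : ι → R, c * ψ (-(χ ⬝ᵥ x)) = if χ = 0 then c * Fintype.card (ι → R) else 0 := by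
    simp only [← mul_sum, ← neg_dotProduct, ψ.sum_apply_dotProduct hψ, neg_eq_zero, mul_ite,
      mul_zero]
  simp only [dotFourierCoeff, sub_mul, sum_sub_distrib, hconst, sub_div]
  split_ifs
  · field_simp
  · simp

lemma norm_dotFourierCoeff_sub_dotFourierCoeff_zero_le (hψ : ψ.IsPrimitive) (g : (ι → R) → ℂ)
    {δ : ℝ} (hδ : 0 ≤ δ) (hg : ∀ χ ≠ 0, ‖dotFourierCoeff ψ g χ‖ ≤ δ) (χ : ι → R) :
    ‖dotFourierCoeff ψ (fun x => g x - dotFourierCoeff ψ g 0) χ‖ ≤ δ := by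
  rw [dotFourierCoeff_sub_const hψ]
  split_ifs with hχ
  · simpa [hχ] using hδ
  · simpa using hg χ hχ

lemma sum_dotFourierCoeff_mul_apply_dotProduct (hψ : ψ.IsPrimitive) (g : (ι → R) → ℂ)
    (z : ι → R) : ∑ χ, dotFourierCoeff ψ g χ * ψ (χ ⬝ᵥ z) = g z := by
  have hN : (Fintype.card (ι → R) : ℂ) ≠ 0 := Nat.cast_ne_zero.mpr Fintype.card_ne_zero
  calc ∑ χ, dotFourierCoeff ψ g χ * ψ (χ ⬝ᵥ z)
      = ∑ x, g x / Fintype.card (ι → R) * ∑ χ : ι → R, ψ ((z - x) ⬝ᵥ χ) := by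
        simp only [dotFourierCoeff, div_mul_eq_mul_div, sum_mul, sum_div, mul_sum]
        rw [sum_comm]
        refine sum_congr rfl fun x _ => sum_congr rfl fun χ _ => ?_
        rw [← ψ.apply_dotProduct_mul_apply_neg_dotProduct]
        ring
    _ = g z := by
        simp only [ψ.sum_apply_sub_dotProduct hψ, mul_ite, mul_zero, eq_comm (a := z),
          sum_ite_eq', mem_univ, if_true]
        field_simp

lemma sum_norm_sum_apply_dotProduct_sq (hψ : ψ.IsPrimitive) (S : Finset (ι → R)) :
    ∑ χ : ι → R, ‖∑ x ∈ S, ψ (χ ⬝ᵥ x)‖ ^ 2 = Fintype.card (ι → R) * #S := by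
  suffices h : ∑ χ : ι → R, ((‖∑ x ∈ S, ψ (χ ⬝ᵥ x)‖ : ℂ) ^ 2) = Fintype.card (ι → R) * #S by
    exact_mod_cast h
  calc ∑ χ : ι → R, ((‖∑ x ∈ S, ψ (χ ⬝ᵥ x)‖ : ℂ) ^ 2)
      = ∑ x ∈ S, ∑ y ∈ S, ∑ χ : ι → R, ψ ((x - y) ⬝ᵥ χ) := by
        simp only [← Complex.mul_conj', map_sum, ← AddChar.map_neg_eq_conj, sum_mul_sum,
          ψ.apply_dotProduct_mul_apply_neg_dotProduct]
        rw [sum_comm]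
        exact sum_congr rfl fun x _ => sum_comm
    _ = Fintype.card (ι → R) * #S := by
        simp only [ψ.sum_apply_sub_dotProduct hψ, sum_ite_eq, sum_ite_mem, inter_self, sum_const,
          nsmul_eq_mul, mul_comm]

lemma norm_sum_sum_apply_add_le (hψ : ψ.IsPrimitive) (g : (ι → R) → ℂ) {δ : ℝ}
    (hg : ∀ χ, ‖dotFourierCoeff ψ g χ‖ ≤ δ) (S T : Finset (ι → R)) :
    ‖∑ x ∈ S, ∑ y ∈ T, g (x + y)‖ ≤ δ * Fintype.card (ι → R) * √(#S * #T) := by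
  set A : (ι → R) → ℂ := fun χ => ∑ x ∈ S, ψ (χ ⬝ᵥ x)
  set B : (ι → R) → ℂ := fun χ => ∑ y ∈ T, ψ (χ ⬝ᵥ y)
  have hδ : 0 ≤ δ := (norm_nonneg _).trans (hg 0)
  have expand : ∑ x ∈ S, ∑ y ∈ T, g (x + y) = ∑ χ, dotFourierCoeff ψ g χ * (A χ * B χ) := by
    calc ∑ x ∈ S, ∑ y ∈ T, g (x + y)
        = ∑ x ∈ S, ∑ y ∈ T, ∑ χ, dotFourierCoeff ψ g χ * (ψ (χ ⬝ᵥ x) * ψ (χ ⬝ᵥ y)) := by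
          refine sum_congr rfl fun x _ => sum_congr rfl fun y _ => ?_
          rw [← sum_dotFourierCoeff_mul_apply_dotProduct hψ g (x + y)]
          simp only [dotProduct_add, AddChar.map_add_eq_mul]
      _ = ∑ χ, dotFourierCoeff ψ g χ * (A χ * B χ) := by
          simp only [A, B, sum_mul, mul_sum]
          rw [sum_comm]
          exact (sum_comm.trans (sum_congr rfl fun y _ => sum_comm)).symm
  calc ‖∑ x ∈ S, ∑ y ∈ T, g (x + y)‖
      ≤ ∑ χ, δ * (‖A χ‖ * ‖B χ‖) := by
        rw [expand]
        refine norm_sum_le_of_le _ fun χ _ => ?_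
        rw [norm_mul, norm_mul]
        exact mul_le_mul_of_nonneg_right (hg χ) (by positivity)
    _ ≤ δ * (√(∑ χ, ‖A χ‖ ^ 2) * √(∑ χ, ‖B χ‖ ^ 2)) := by
        rw [← mul_sum]
        exact mul_le_mul_of_nonneg_left (Real.sum_mul_le_sqrt_mul_sqrt _ _ _) hδ
    _ = δ * Fintype.card (ι → R) * √(#S * #T) := by
        simp only [A, B, sum_norm_sum_apply_dotProduct_sq hψ]
        rw [← Real.sqrt_mul (by positivity), mul_mul_mul_comm, Real.sqrt_mul (by positivity),
          Real.sqrt_mul_self (by positivity), mul_assoc]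

lemma norm_sum_sum_indicator_mul_apply_add_le (hψ : ψ.IsPrimitive) (g : (ι → R) → ℂ) {δ : ℝ}
    (hg : ∀ χ, ‖dotFourierCoeff ψ g χ‖ ≤ δ) (S T : Finset (ι → R)) :
    ‖(∑ x, ∑ y, (if x ∈ S then (1 : ℂ) else 0) * g (x + y) * (if y ∈ T then (1 : ℂ) else 0)) /
        ((Fintype.card (ι → R) : ℂ) * Fintype.card (ι → R))‖ ≤
      δ * √(#S * #T) / Fintype.card (ι → R) := by
  have hN : (0 : ℝ) < Fintype.card (ι → R) := Nat.cast_pos.mpr Fintype.card_pos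
  simp only [ite_mul, one_mul, zero_mul, mul_ite, mul_one, mul_zero, sum_ite_mem, univ_inter,
    sum_ite_irrel, sum_const_zero]
  rw [norm_div, norm_mul, Complex.norm_natCast, div_le_div_iff₀ (by positivity) hN]
  calc ‖∑ x ∈ S, ∑ y ∈ T, g (x + y)‖ * Fintype.card (ι → R)
      ≤ δ * Fintype.card (ι → R) * √(#S * #T) * Fintype.card (ι → R) := by
        gcongr
        exact norm_sum_sum_apply_add_le hψ g hg S T
    _ = δ * √(#S * #T) * (Fintype.card (ι → R) * Fintype.card (ι → R)) := by ring

end DotFourier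

section GaussSum

variable {F : Type*} [Field F] [Fintype F] [DecidableEq F] {ψ : AddChar F ℂ}

lemma AddChar.sum_apply_mul_mul_sub_mul_sub_mul (hψ : ψ.IsPrimitive) {γ : F} (hγ : γ ≠ 0)
    (α β : F) :
    ∑ ab : F × F, ψ (γ * ab.1 * ab.2 - α * ab.1 - β * ab.2) =
      Fintype.card F * ψ (-(β * (α / γ))) := by
  have inner (b : F) : ∑ a : F, ψ (γ * a * b - α * a - β * b) =
      if b = α / γ then Fintype.card F * ψ (-(β * b)) else 0 := by
    calc ∑ a : F, ψ (γ * a * b - α * a - β * b)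
        = ψ (-(β * b)) * ∑ a : F, ψ (a * (γ * b - α)) := by
          rw [mul_sum]
          refine sum_congr rfl fun a _ => ?_
          rw [← map_add_eq_mul]
          ring_nf
      _ = _ := by
          have hb : γ * b - α = 0 ↔ b = α / γ := by rw [sub_eq_zero, eq_div_iff hγ, mul_comm]
          rw [sum_mulShift _ hψ, Nat.cast_ite, Nat.cast_zero, mul_ite, mul_zero, mul_comm (ψ _)]
          exact if_congr hb rfl rfl
  rw [Fintype.sum_prod_type_right]
  simp only [inner, sum_ite_eq', mem_univ, if_true]

lemma AddChar.norm_sum_apply_sum_mul_mul_sub_mul_sub_mul {κ : Type*} [Fintype κ] [DecidableEq κ]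
    (hψ : ψ.IsPrimitive) {γ : F} (hγ : γ ≠ 0) (α β : κ → F) :
    ‖∑ p : κ → F × F, ψ (∑ k, (γ * (p k).1 * (p k).2 - α k * (p k).1 - β k * (p k).2))‖ =
      Fintype.card F ^ Fintype.card κ := by
  simp_rw [ψ.map_sum_eq_prod]
  rw [← Fintype.prod_sum fun k (ab : F × F) => ψ (γ * ab.1 * ab.2 - α k * ab.1 - β k * ab.2),
    norm_prod]
  simp [ψ.sum_apply_mul_mul_sub_mul_sub_mul hψ hγ, AddChar.norm_apply]

end GaussSum

section Pairs

def piFinTwoMulEquiv (α : Type*) (m : ℕ) : (Fin m → α × α) ≃ (Fin (2 * m) → α) where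
  toFun p i := if (i : ℕ) % 2 = 0 then (p ⟨i / 2, by omega⟩).1 else (p ⟨i / 2, by omega⟩).2
  invFun x k := (x ⟨2 * k, by omega⟩, x ⟨2 * k + 1, by omega⟩)
  left_inv p := by
    ext k
    · simp
    · simp [Nat.add_mod, Nat.add_div]
  right_inv x := by
    ext i
    dsimp only
    split_ifs <;> congr 2 <;> omega

variable {m : ℕ}

lemma Fin.sum_univ_two_mul {M : Type*} [AddCommMonoid M] (g : Fin (2 * m) → M) :
    ∑ i, g i = ∑ k : Fin m, (g ⟨2 * k, by omega⟩ + g ⟨2 * k + 1, by omega⟩) := by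
  rw [← (finProdFinEquiv.trans (finCongr (mul_comm m 2))).sum_comp, Fintype.sum_prod_type]
  refine sum_congr rfl fun k _ => ?_
  rw [Fin.sum_univ_two]
  congr 2 <;> ext <;> simp [finProdFinEquiv_apply_val, add_comm]

variable {α : Type*}

@[simp]
lemma piFinTwoMulEquiv_apply_two_mul (p : Fin m → α × α) (k : Fin m) :
    piFinTwoMulEquiv α m p ⟨2 * k, by omega⟩ = (p k).1 := by
  simp [piFinTwoMulEquiv]

@[simp]
lemma piFinTwoMulEquiv_apply_two_mul_add_one (p : Fin m → α × α) (k : Fin m) :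
    piFinTwoMulEquiv α m p ⟨2 * k + 1, by omega⟩ = (p k).2 := by
  simp [piFinTwoMulEquiv, Nat.add_mod, Nat.add_div]

lemma dotProduct_piFinTwoMulEquiv {R : Type*} [CommRing R] (χ : Fin (2 * m) → R)
    (p : Fin m → R × R) :
    χ ⬝ᵥ piFinTwoMulEquiv R m p =
      ∑ k : Fin m, (χ ⟨2 * k, by omega⟩ * (p k).1 + χ ⟨2 * k + 1, by omega⟩ * (p k).2) := by
  simp [dotProduct, Fin.sum_univ_two_mul]

lemma quadQ_piFinTwoMulEquiv (q : ℕ) (p : Fin m → ZMod q × ZMod q) :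
    quadQ q (2 * m) (piFinTwoMulEquiv (ZMod q) m p) = ∑ k : Fin m, (p k).1 * (p k).2 := by
  rw [quadQ, Fin.sum_univ_two_mul]
  refine sum_congr rfl fun k _ => ?_
  have hodd : ¬((2 * (k : ℕ) + 1) % 2 = 0 ∧ 2 * (k : ℕ) + 1 + 1 < 2 * m) := by omega
  dsimp only [Fin.val_mk]
  rw [dif_pos ⟨by omega, by omega⟩, dif_neg hodd, add_zero, piFinTwoMulEquiv_apply_two_mul,
    piFinTwoMulEquiv_apply_two_mul_add_one]

end Pairs

lemma norm_sum_apply_mul_quadQ_sub_dotProduct {q : ℕ} [Fact q.Prime] {ψ : AddChar (ZMod q) ℂ}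
    (hψ : ψ.IsPrimitive) {γ : ZMod q} (hγ : γ ≠ 0) (m : ℕ) (χ : Fin (2 * m) → ZMod q) :
    ‖∑ x, ψ (γ * quadQ q (2 * m) x - χ ⬝ᵥ x)‖ = (q : ℝ) ^ m := by
  rw [← (piFinTwoMulEquiv (ZMod q) m).sum_comp,
    show (q : ℝ) ^ m = Fintype.card (ZMod q) ^ Fintype.card (Fin m) by simp [ZMod.card]]
  simp only [quadQ_piFinTwoMulEquiv, dotProduct_piFinTwoMulEquiv, mul_sum, ← sum_sub_distrib]
  convert ψ.norm_sum_apply_sum_mul_mul_sub_mul_sub_mul hψ hγ (fun k : Fin m => χ ⟨2 * k, by omega⟩)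
    (fun k : Fin m => χ ⟨2 * k + 1, by omega⟩) using 5
  ring

lemma norm_dotFourierCoeff_quadF_le {q : ℕ} [NeZero q] [Fact q.Prime] [DecidableEq (ZMod q)]
    (m : ℕ) {χ : Fin (2 * m) → ZMod q} (hχ : χ ≠ 0) :
    ‖dotFourierCoeff ZMod.stdAddChar (quadF q (2 * m)) χ‖ ≤ ((q : ℝ) ^ m)⁻¹ := by
  set ψ : AddChar (ZMod q) ℂ := ZMod.stdAddChar
  have hψ : ψ.IsPrimitive := ZMod.isPrimitive_stdAddChar q
  have hq : (0 : ℝ) < q := Nat.cast_pos.mpr (Fact.out : q.Prime).pos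
  have hpoint (x : Fin (2 * m) → ZMod q) : quadF q (2 * m) x * ψ (-(χ ⬝ᵥ x)) =
      1 / 2 * ψ ((-χ) ⬝ᵥ x) + ∑ γ ∈ univ.filter (fun γ : ZMod q => γ ≠ 0),
        1 / (2 * (q : ℂ)) * ψ (γ * quadQ q (2 * m) x - χ ⬝ᵥ x) := by
    rw [quadF, eF_eq_stdAddChar, add_mul, sum_mul, neg_dotProduct]
    congr 1
    refine sum_congr rfl fun γ _ => ?_
    rw [mul_assoc, ← AddChar.map_add_eq_mul, sub_eq_add_neg]
  have hexpand : ∑ x, quadF q (2 * m) x * ψ (-(χ ⬝ᵥ x)) =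
      ∑ γ ∈ univ.filter (fun γ : ZMod q => γ ≠ 0),
        ∑ x, 1 / (2 * (q : ℂ)) * ψ (γ * quadQ q (2 * m) x - χ ⬝ᵥ x) := by
    rw [sum_congr rfl fun x _ => hpoint x, sum_add_distrib, ← mul_sum, ψ.sum_apply_dotProduct hψ,
      if_neg (neg_ne_zero.mpr hχ), mul_zero, zero_add, sum_comm]
  have hbound : ‖∑ x, quadF q (2 * m) x * ψ (-(χ ⬝ᵥ x))‖ ≤ q ^ m := by
    rw [hexpand]
    calc _ ≤ ∑ γ ∈ univ.filter (fun γ : ZMod q => γ ≠ 0), 1 / (2 * (q : ℝ)) * q ^ m := by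
          refine norm_sum_le_of_le _ fun γ hγ => ?_
          rw [← mul_sum, norm_mul, norm_sum_apply_mul_quadQ_sub_dotProduct hψ (mem_filter.mp hγ).2]
          simp
      _ ≤ q * (1 / (2 * q) * q ^ m) := by
          rw [sum_const, nsmul_eq_mul]
          gcongr
          exact_mod_cast (card_filter_le _ _).trans (ZMod.card q).le
      _ ≤ q ^ m := by
          field_simp
          linarith [pow_pos hq m]
  rw [dotFourierCoeff, norm_div, Complex.norm_natCast, div_le_iff₀ (by positivity)]
  calc _ ≤ (q : ℝ) ^ m := hbound
    _ = ((q : ℝ) ^ m)⁻¹ * Fintype.card (Fin (2 * m) → ZMod q) := by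
        rw [Fintype.card_fun, Fintype.card_fin, ZMod.card, Nat.cast_pow, two_mul, pow_add]
        field_simp

/-- spreadness of the quadratic-phase function in `𝔽ⁿ`, `𝔽` of prime order:
all nontrivial Fourier coefficients of `f` are at most `e^{−cn}`, and consequently for all
`S, T ⊆ 𝔽ⁿ` the bilinear form `E 1_S(x)(f(x+y) − E f)1_T(y)` is at most
`e^{−cn}·√(|S||T|)/|𝔽|ⁿ` in absolute value. -/
theorem stmt_18 (q : ℕ) (hq : q.Prime) [NeZero q] [DecidableEq (ZMod q)] :
    ∃ c : ℝ, 0 < c ∧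
      ∀ n : ℕ, Even n →
        (∀ χ : Fin n → ZMod q, χ ≠ 0 →
          ‖(∑ x : Fin n → ZMod q,
              quadF q n x * eF q (-(∑ i, χ i * x i))) / (q : ℂ) ^ n‖
            ≤ Real.exp (-c * n)) ∧
        (∀ S T : Finset (Fin n → ZMod q),
          ‖(∑ x : Fin n → ZMod q, ∑ y : Fin n → ZMod q,
              (if x ∈ S then (1 : ℂ) else 0) *
                (quadF q n (x + y) - (∑ z : Fin n → ZMod q, quadF q n z) / (q : ℂ) ^ n) *
                (if y ∈ T then (1 : ℂ) else 0)) / ((q : ℂ) ^ n * (q : ℂ) ^ n)‖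
            ≤ Real.exp (-c * n) * Real.sqrt ((S.card : ℝ) * T.card) / (q : ℝ) ^ n) := by
  have : Fact q.Prime := ⟨hq⟩
  have hψ := ZMod.isPrimitive_stdAddChar q
  refine ⟨Real.log q / 2, div_pos (Real.log_pos (by exact_mod_cast hq.one_lt)) two_pos, ?_⟩
  intro n hn
  obtain ⟨m, rfl⟩ := hn.two_dvd
  have hexp : Real.exp (-(Real.log q / 2) * ↑(2 * m)) = ((q : ℝ) ^ m)⁻¹ := by
    rw [← Real.exp_log (pow_pos (Nat.cast_pos.mpr hq.pos) m), ← Real.exp_neg, Real.log_pow]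
    push_cast
    ring_nf
  have hcardC : (Fintype.card (Fin (2 * m) → ZMod q) : ℂ) = (q : ℂ) ^ (2 * m) := by simp [ZMod.card]
  have hcardR : (Fintype.card (Fin (2 * m) → ZMod q) : ℝ) = (q : ℝ) ^ (2 * m) := by simp [ZMod.card]
  have hcoeff (χ : Fin (2 * m) → ZMod q) (hχ : χ ≠ 0) := norm_dotFourierCoeff_quadF_le m hχ
  refine ⟨fun χ hχ => ?_, fun S T => ?_⟩
  · rw [hexp, eF_eq_stdAddChar, ← hcardC]
    exact hcoeff χ hχ
  · have hg := norm_dotFourierCoeff_sub_dotFourierCoeff_zero_le hψ _ (by positivity) hcoeff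
    have key := norm_sum_sum_indicator_mul_apply_add_le hψ _ hg S T
    rw [dotFourierCoeff_zero, hcardC, hcardR] at key
    rw [hexp]
    exact key
end
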